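/- arXiv:1308.2837 — 6 statements merged into one kernel-verified Lean document; each statement's English description precedes it below -/
import Mathlib

section
/- Let H be a countable hypergraph with finite hyperedges, and let (H_n) and (J_n) be two chains of finite induced subhypergraphs whose unions of vertex sets both equal V(H) (with induced hyperedges). Then lim id(H_n) = lim id(J_n). -/
open Finset Filter

/-- The number of independent sets of a finite hypergraph `(V, E)`. -/
noncomputable def indepCount (V : Finset ℕ) (E : Finset (Finset ℕ)) : ℕ :=
  (V.powerset.filter (fun S => ∀ e ∈ E, ¬ e ⊆ S)).card

/-- The independence density of a finite hypergraph `(V, E)`. -/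
noncomputable def indepDensity (V : Finset ℕ) (E : Finset (Finset ℕ)) : ℝ :=
  (indepCount V E : ℝ) / 2 ^ V.card

open scoped Classical in
/-- The hyperedges of a countable hypergraph with hyperedge set `E`
induced on a finite vertex set `V`. -/
noncomputable def inducedEdges (E : Set (Finset ℕ)) (V : Finset ℕ) :
    Finset (Finset ℕ) :=
  V.powerset.filter (fun e => e ∈ E)

lemma indepCount_le (E : Set (Finset ℕ)) {V W : Finset ℕ} (hVW : V ⊆ W) :
    indepCount W (inducedEdges E W) ≤
      indepCount V (inducedEdges E V) * 2 ^ (W \ V).card := by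
  classical
  rw [indepCount, indepCount, ← Finset.card_powerset (W \ V), ← Finset.card_product]
  apply Finset.card_le_card_of_injOn (fun S => (S ∩ V, S \ V))
  · intro S hS
    simp only [Finset.mem_coe, Finset.mem_filter, Finset.mem_powerset] at hS
    obtain ⟨hSW, hind⟩ := hS
    simp only [Finset.mem_coe, Finset.mem_product, Finset.mem_filter, Finset.mem_powerset]
    refine ⟨⟨Finset.inter_subset_right, ?_⟩, Finset.sdiff_subset_sdiff hSW le_rfl⟩
    intro e he hsub
    simp only [inducedEdges, Finset.mem_filter, Finset.mem_powerset] at he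
    exact hind e (by
      simp only [inducedEdges, Finset.mem_filter, Finset.mem_powerset]
      exact ⟨he.1.trans hVW, he.2⟩) (hsub.trans Finset.inter_subset_left)
  · intro S _ T _ h
    simp only [Prod.mk.injEq] at h
    rw [← Finset.sdiff_union_inter S V, ← Finset.sdiff_union_inter T V, h.1, h.2]

lemma indepDensity_anti (E : Set (Finset ℕ)) {V W : Finset ℕ} (hVW : V ⊆ W) :
    indepDensity W (inducedEdges E W) ≤ indepDensity V (inducedEdges E V) := by
  have hcount := indepCount_le E hVW
  have hWc : W.card = V.card + (W \ V).card := by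
    rw [Finset.card_sdiff_of_subset hVW]
    have := Finset.card_le_card hVW
    omega
  rw [indepDensity, indepDensity,
    div_le_div_iff₀ (by positivity) (by positivity)]
  have h1 : ((indepCount W (inducedEdges E W)) : ℝ) ≤
      (indepCount V (inducedEdges E V) : ℝ) * 2 ^ (W \ V).card := by
    exact_mod_cast hcount
  calc ((indepCount W (inducedEdges E W)) : ℝ) * 2 ^ V.card
      ≤ ((indepCount V (inducedEdges E V) : ℝ) * 2 ^ (W \ V).card) * 2 ^ V.card := by
        have : (0:ℝ) < 2 ^ V.card := by positivity
        nlinarith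
    _ = (indepCount V (inducedEdges E V) : ℝ) * 2 ^ W.card := by
        rw [mul_assoc, ← pow_add, hWc, Nat.add_comm]

lemma indepDensity_chain_le (E : Set (Finset ℕ))
    (V W : ℕ → Finset ℕ) (hW : Monotone W)
    (hWU : (⋃ n, (W n : Set ℕ)) = Set.univ)
    (L L' : ℝ)
    (hL : Tendsto (fun n => indepDensity (V n) (inducedEdges E (V n))) atTop (nhds L))
    (hL' : Tendsto (fun n => indepDensity (W n) (inducedEdges E (W n))) atTop (nhds L')) :
    L' ≤ L := by
  classical
  have key : ∀ n, L' ≤ indepDensity (V n) (inducedEdges E (V n)) := by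
    intro n
    -- find m with V n ⊆ W m
    have hex : ∀ v : ℕ, ∃ m, v ∈ W m := by
      intro v
      have : v ∈ (⋃ n, (W n : Set ℕ)) := by rw [hWU]; trivial
      simpa using this
    choose g hg using hex
    set m := (V n).sup g with hm
    have hsub : V n ⊆ W m := by
      intro v hv
      exact hW (Finset.le_sup (f := g) hv) (hg v)
    have h1 : L' ≤ indepDensity (W m) (inducedEdges E (W m)) := by
      apply le_of_tendsto hL'
      filter_upwards [eventually_ge_atTop m] with k hk
      exact indepDensity_anti E (hW hk)
    exact h1.trans (indepDensity_anti E hsub)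
  exact ge_of_tendsto' hL key

/-- Let `H` be a countable hypergraph on vertex set `ℕ` with hyperedge set `E`
(all hyperedges finite), and let `(V n)` and `(W n)` be two chains of finite
vertex sets exhausting `ℕ`. Then the limits of the independence densities
of the induced subhypergraphs along the two chains agree. -/
theorem indepDensity_chain_independent (E : Set (Finset ℕ))
    (V W : ℕ → Finset ℕ) (hV : Monotone V) (hW : Monotone W)
    (hVU : (⋃ n, (V n : Set ℕ)) = Set.univ)
    (hWU : (⋃ n, (W n : Set ℕ)) = Set.univ)
    (L L' : ℝ)
    (hL : Tendsto (fun n => indepDensity (V n) (inducedEdges E (V n))) atTop (nhds L))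
    (hL' : Tendsto (fun n => indepDensity (W n) (inducedEdges E (W n))) atTop (nhds L')) :
    L = L' := by
  exact le_antisymm (indepDensity_chain_le E W V hV hVU L' L hL' hL)
    (indepDensity_chain_le E V W hW hWU L L' hL hL')
end

section
/- Let H be a countable hypergraph all of whose hyperedges have cardinality at most k, with finite matching number μ(H). Then 2^{-k·μ(H)} ≤ id(H) ≤ (1 - 2^{-k})^{μ(H)}. In particular id(H) > 0. -/
open Finset Filter

/-- A finite set `M` of hyperedges is a matching if its members are
pairwise disjoint. -/
def IsMatching (E : Set (Finset ℕ)) (M : Finset (Finset ℕ)) : Prop :=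
  ↑M ⊆ E ∧ (M : Set (Finset ℕ)).Pairwise Disjoint

/- ### Auxiliary lemmas -/

lemma indepDensity_nonneg (V : Finset ℕ) (E : Finset (Finset ℕ)) :
    0 ≤ indepDensity V E := by
  unfold indepDensity
  positivity

lemma indepCount_mono (V : Finset ℕ) {E₁ E₂ : Finset (Finset ℕ)} (h : E₁ ⊆ E₂) :
    indepCount V E₂ ≤ indepCount V E₁ := by
  apply Finset.card_le_card
  intro S hS
  simp only [indepCount, Finset.mem_filter] at hS ⊢
  exact ⟨hS.1, fun e he => hS.2 e (h he)⟩

/-- Lower bound on the count: subsets avoiding a "cover" `W` are independent. -/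
lemma indepCount_lower (V : Finset ℕ) (E' : Finset (Finset ℕ)) (W : Finset ℕ)
    (hW : ∀ e ∈ E', ¬ Disjoint e W) :
    2 ^ (V \ W).card ≤ indepCount V E' := by
  rw [← Finset.card_powerset]
  apply Finset.card_le_card
  intro S hS
  rw [Finset.mem_powerset] at hS
  simp only [indepCount, Finset.mem_filter, Finset.mem_powerset]
  refine ⟨hS.trans Finset.sdiff_subset, fun e he hsub => ?_⟩
  exact hW e he (Finset.disjoint_left.mpr fun x hx =>
    (Finset.mem_sdiff.mp (hS (hsub hx))).2)

/-- Key step for the upper bound. -/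
lemma indepCount_insert_le (V : Finset ℕ) (s : Finset (Finset ℕ)) (e : Finset ℕ)
    (he : e ⊆ V) (hene : e.Nonempty) :
    indepCount V (insert e s) ≤ (2 ^ e.card - 1) * indepCount (V \ e) s := by
  classical
  have hkey : indepCount V (insert e s) ≤
      ((e.powerset.erase e) ×ˢ
        ((V \ e).powerset.filter (fun S => ∀ f ∈ s, ¬ f ⊆ S))).card := by
    apply Finset.card_le_card_of_injOn (fun S => (S ∩ e, S \ e))
    · intro S hS
      simp only [Finset.mem_coe, Finset.mem_filter, Finset.mem_powerset, Finset.mem_insert] at hS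
      obtain ⟨hSV, hforb⟩ := hS
      simp only [Finset.mem_coe, Finset.mem_product, Finset.mem_erase, Finset.mem_powerset,
        Finset.mem_filter]
      refine ⟨⟨?_, Finset.inter_subset_right⟩, ?_, ?_⟩
      · intro hEq
        exact hforb e (Or.inl rfl) (by rw [← hEq]; exact Finset.inter_subset_left)
      · intro x hx
        rw [Finset.mem_sdiff] at hx ⊢
        exact ⟨hSV hx.1, hx.2⟩
      · intro f hf hfsub
        exact hforb f (Or.inr hf) (hfsub.trans Finset.sdiff_subset)
    · intro S₁ h₁ S₂ h₂ hEq
      have h1 : S₁ \ e ∪ S₁ ∩ e = S₁ := Finset.sdiff_union_inter S₁ e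
      have h2 : S₂ \ e ∪ S₂ ∩ e = S₂ := Finset.sdiff_union_inter S₂ e
      have hp : S₁ ∩ e = S₂ ∩ e ∧ S₁ \ e = S₂ \ e := Prod.mk.injEq .. ▸ hEq
      rw [← h1, ← h2, hp.1, hp.2]
  calc indepCount V (insert e s) ≤ _ := hkey
    _ = (2 ^ e.card - 1) * indepCount (V \ e) s := by
        rw [Finset.card_product, Finset.card_erase_of_mem (Finset.mem_powerset_self e),
          Finset.card_powerset]
        rfl

lemma two_pow_sub_one_div (n k : ℕ) (hn : n ≤ k) :
    ((2 ^ n - 1 : ℕ) : ℝ) / 2 ^ n ≤ 1 - (2 : ℝ)⁻¹ ^ k := by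
  have h1 : (1 : ℕ) ≤ 2 ^ n := Nat.one_le_two_pow
  have h2 : ((2 ^ n - 1 : ℕ) : ℝ) = 2 ^ n - 1 := by
    push_cast [h1]; ring
  rw [h2]
  have hpos : (0 : ℝ) < 2 ^ n := by positivity
  rw [div_le_iff₀ hpos, sub_mul, one_mul]
  have : (2 : ℝ)⁻¹ ^ k * 2 ^ n ≤ 1 := by
    rw [inv_pow, inv_mul_le_iff₀ (by positivity), mul_one]
    exact pow_le_pow_right₀ (by norm_num) hn
  linarith

lemma one_sub_inv_pow_nonneg (k : ℕ) : (0 : ℝ) ≤ 1 - (2 : ℝ)⁻¹ ^ k := by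
  have : (2 : ℝ)⁻¹ ^ k ≤ 1 := pow_le_one₀ (by norm_num) (by norm_num)
  linarith

/-- Upper bound: a matching with edges of size `≤ k` inside `V` forces
the independence density below `(1 - 2⁻ᵏ)^|M|`. -/
lemma indepDensity_upper (k : ℕ) (M : Finset (Finset ℕ)) :
    ∀ (V : Finset ℕ), (∀ e ∈ M, e ⊆ V) → (∀ e ∈ M, e.Nonempty) →
    (∀ e ∈ M, e.card ≤ k) → (M : Set (Finset ℕ)).Pairwise Disjoint →
    indepDensity V M ≤ (1 - (2 : ℝ)⁻¹ ^ k) ^ M.card := by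
  classical
  induction M using Finset.induction_on with
  | empty =>
      intro V _ _ _ _
      simp only [Finset.card_empty, pow_zero, indepDensity, indepCount]
      have : (Finset.filter (fun S => ∀ e ∈ (∅ : Finset (Finset ℕ)), ¬ e ⊆ S)
          V.powerset) = V.powerset := by
        apply Finset.filter_true_of_mem; intro _ _; simp
      rw [this, Finset.card_powerset]
      rw [div_le_one (by positivity)]
      norm_cast
  | @insert e s hes ih =>
      intro V hV hne hcard hdisj
      have heV : e ⊆ V := hV e (Finset.mem_insert_self e s)
      have hene : e.Nonempty := hne e (Finset.mem_insert_self e s)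
      have hcount := indepCount_insert_le V s e heV hene
      have hcard_sub : e.card ≤ V.card := Finset.card_le_card heV
      have hsplit : V.card = e.card + (V \ e).card := by
        rw [Finset.card_sdiff_of_subset heV]; omega
      have hsV : ∀ f ∈ s, f ⊆ V \ e := by
        intro f hf x hx
        rw [Finset.mem_sdiff]
        refine ⟨hV f (Finset.mem_insert_of_mem hf) hx, fun hxe => ?_⟩
        have hd : Disjoint e f := hdisj (by simp) (by simp [hf])
          (fun h => hes (h ▸ hf))
        exact Finset.disjoint_left.mp hd hxe hx
      have ihs := ih (V \ e) hsV (fun f hf => hne f (Finset.mem_insert_of_mem hf))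
        (fun f hf => hcard f (Finset.mem_insert_of_mem hf))
        (hdisj.mono (by simp only [Finset.coe_insert]; exact Set.subset_insert _ _))
      rw [Finset.card_insert_of_notMem hes, pow_succ']
      have hne0 : (0 : ℝ) < 2 ^ (V \ e).card := by positivity
      calc indepDensity V (insert e s)
          = (indepCount V (insert e s) : ℝ) / (2 ^ e.card * 2 ^ (V \ e).card) := by
            rw [indepDensity, hsplit, pow_add]
        _ ≤ (((2 ^ e.card - 1 : ℕ) : ℝ) * indepCount (V \ e) s) /
              (2 ^ e.card * 2 ^ (V \ e).card) := by
            gcongr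
            exact_mod_cast hcount
        _ = (((2 ^ e.card - 1 : ℕ) : ℝ) / 2 ^ e.card) * indepDensity (V \ e) s := by
            rw [indepDensity]
            field_simp
        _ ≤ (1 - (2 : ℝ)⁻¹ ^ k) * (1 - (2 : ℝ)⁻¹ ^ k) ^ s.card := by
            exact mul_le_mul (two_pow_sub_one_div _ _ (hcard e (Finset.mem_insert_self e s)))
              ihs (indepDensity_nonneg _ _) (one_sub_inv_pow_nonneg k)

/-- Lower bound for each finite induced subhypergraph. -/
lemma density_lower (E : Set (Finset ℕ)) (k μ : ℕ)
    (hne : ∀ e ∈ E, e.Nonempty) (hcard : ∀ e ∈ E, e.card ≤ k)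
    (hμ' : ¬ ∃ M : Finset (Finset ℕ), IsMatching E M ∧ M.card = μ + 1)
    (V : Finset ℕ) :
    (2 : ℝ)⁻¹ ^ (k * μ) ≤ indepDensity V (inducedEdges E V) := by
  classical
  set E' := inducedEdges E V with hE'
  have hE'E : ∀ e ∈ E', e ∈ E := by
    intro e he
    simp only [hE', inducedEdges, Finset.mem_filter] at he
    exact he.2
  -- every matching inside E has size at most μ
  have hmax : ∀ M : Finset (Finset ℕ), ↑M ⊆ E →
      (M : Set (Finset ℕ)).Pairwise Disjoint → M.card ≤ μ := by
    intro M hME hMd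
    by_contra h
    push_neg at h
    obtain ⟨M', hM'sub, hM'card⟩ := Finset.exists_subset_card_eq (Nat.succ_le_of_lt h)
    exact hμ' ⟨M', ⟨(Finset.coe_subset.mpr hM'sub).trans hME,
      hMd.mono (Finset.coe_subset.mpr hM'sub)⟩, hM'card⟩
  -- take a maximum matching inside E'
  let MM : Finset (Finset (Finset ℕ)) :=
    E'.powerset.filter (fun M => (M : Set (Finset ℕ)).Pairwise Disjoint)
  have hemp : (∅ : Finset (Finset ℕ)) ∈ MM := by simp [MM]
  obtain ⟨M, hMMM, hMmax⟩ := Finset.exists_max_image MM Finset.card ⟨∅, hemp⟩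
  simp only [MM, Finset.mem_filter, Finset.mem_powerset] at hMMM
  obtain ⟨hME', hMd⟩ := hMMM
  set W := M.biUnion id with hW
  -- every edge of E' meets W
  have hhit : ∀ e ∈ E', ¬ Disjoint e W := by
    intro e he hd
    have hdf : ∀ f ∈ M, Disjoint e f := by
      intro f hf
      exact hd.mono_right (Finset.subset_biUnion_of_mem id hf)
    have heM : e ∉ M := by
      intro heM
      have he0 : e = ∅ := by simpa using (hdf e heM)
      exact (hne e (hE'E e he)).ne_empty he0
    have hmem : insert e M ∈ MM := by
      simp only [MM, Finset.mem_filter, Finset.mem_powerset]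
      refine ⟨Finset.insert_subset he hME', ?_⟩
      rw [Finset.coe_insert]
      exact hMd.insert (fun f hf _ => ⟨hdf f hf, (hdf f hf).symm⟩)
    have := hMmax _ hmem
    rw [Finset.card_insert_of_notMem heM] at this
    omega
  have hMμ : M.card ≤ μ := hmax M (fun e he => hE'E e (hME' (Finset.mem_coe.mp he))) hMd
  have hWcard : W.card ≤ k * μ := by
    calc W.card ≤ ∑ e ∈ M, (id e).card := Finset.card_biUnion_le
      _ ≤ ∑ _e ∈ M, k := Finset.sum_le_sum (fun e he => hcard e (hE'E e (hME' he)))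
      _ = M.card * k := by rw [Finset.sum_const, smul_eq_mul]
      _ ≤ μ * k := Nat.mul_le_mul_right k hMμ
      _ = k * μ := Nat.mul_comm μ k
  have hsum : (V \ W).card + (V ∩ W).card = V.card := Finset.card_sdiff_add_card_inter V W
  have hVWle : (V ∩ W).card ≤ k * μ :=
    le_trans (Finset.card_le_card Finset.inter_subset_right) hWcard
  have step1 : (2 : ℝ)⁻¹ ^ (k * μ) ≤ (2 : ℝ)⁻¹ ^ ((V ∩ W).card) :=
    pow_le_pow_of_le_one (by norm_num) (by norm_num) hVWle
  have step2 : (2 : ℝ)⁻¹ ^ ((V ∩ W).card) = 2 ^ (V \ W).card / 2 ^ V.card := by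
    rw [← hsum, pow_add, inv_pow]
    field_simp
  have step3 : (2 : ℝ) ^ (V \ W).card / 2 ^ V.card ≤ indepDensity V E' := by
    rw [indepDensity]
    gcongr
    exact_mod_cast indepCount_lower V E' W hhit
  calc (2 : ℝ)⁻¹ ^ (k * μ) ≤ _ := step1
    _ = _ := step2
    _ ≤ _ := step3

/-- Let `H` be a countable hypergraph on `ℕ` whose hyperedges are nonempty and
of cardinality at most `k > 0`, with finite matching number `μ` (there is a
matching of size `μ` but none of size `μ + 1`). Then the independence density
`L` of `H` (the limit along any chain exhausting the vertex set) satisfies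
`0 < 2^{-kμ} ≤ L ≤ (1 - 2^{-k})^μ`. -/
theorem indepDensity_matching_bounds (E : Set (Finset ℕ)) (k μ : ℕ)
    (hk : 0 < k)
    (hne : ∀ e ∈ E, e.Nonempty) (hcard : ∀ e ∈ E, e.card ≤ k)
    (hμ : ∃ M : Finset (Finset ℕ), IsMatching E M ∧ M.card = μ)
    (hμ' : ¬ ∃ M : Finset (Finset ℕ), IsMatching E M ∧ M.card = μ + 1)
    (V : ℕ → Finset ℕ) (hV : Monotone V)
    (hVU : (⋃ n, (V n : Set ℕ)) = Set.univ) (L : ℝ)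
    (hL : Tendsto (fun n => indepDensity (V n) (inducedEdges E (V n))) atTop (nhds L)) :
    (0 : ℝ) < (2 : ℝ)⁻¹ ^ (k * μ) ∧ (2 : ℝ)⁻¹ ^ (k * μ) ≤ L ∧
      L ≤ (1 - (2 : ℝ)⁻¹ ^ k) ^ μ := by
  classical
  refine ⟨by positivity, ?_, ?_⟩
  · exact ge_of_tendsto hL (Eventually.of_forall fun n =>
      density_lower E k μ hne hcard hμ' (V n))
  · obtain ⟨M, ⟨hME, hMd⟩, hMcard⟩ := hμ
    set W := M.biUnion id with hWdef
    have hexists : ∀ x : ℕ, ∃ n, x ∈ V n := by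
      intro x
      have hx : x ∈ (⋃ n, (V n : Set ℕ)) := hVU ▸ Set.mem_univ x
      simpa using hx
    choose f hf using hexists
    set N := W.sup f with hN
    apply le_of_tendsto hL
    rw [eventually_atTop]
    refine ⟨N, fun n hn => ?_⟩
    have hWV : W ⊆ V n := fun x hx =>
      hV ((Finset.le_sup hx).trans hn) (hf x)
    have hMind : M ⊆ inducedEdges E (V n) := by
      intro e he
      simp only [inducedEdges, Finset.mem_filter, Finset.mem_powerset]
      exact ⟨(Finset.subset_biUnion_of_mem id he).trans hWV, hME he⟩
    have h1 : indepDensity (V n) (inducedEdges E (V n)) ≤ indepDensity (V n) M := by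
      rw [indepDensity, indepDensity]
      gcongr
      exact_mod_cast indepCount_mono (V n) hMind
    have h2 : indepDensity (V n) M ≤ (1 - (2 : ℝ)⁻¹ ^ k) ^ M.card :=
      indepDensity_upper k M (V n)
        (fun e he => (Finset.subset_biUnion_of_mem id he).trans hWV)
        (fun e he => hne e (hME he)) (fun e he => hcard e (hME he)) hMd
    rw [hMcard] at h2
    exact h1.trans h2
end

section
/- For every countable hypergraph H whose hyperedges all have cardinality at most k (for a fixed positive integer k), the independence density id(H) is a rational number. -/
open Finset Filter

noncomputable def hdens (E : Set (Finset ℕ)) (V : Finset ℕ) : ℝ :=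
  indepDensity V (inducedEdges E V)

noncomputable def ID (E : Set (Finset ℕ)) : ℝ := ⨅ F : Finset ℕ, hdens E F

def hcond (E : Set (Finset ℕ)) (W σ : Finset ℕ) : Set (Finset ℕ) :=
  {f | ∃ e ∈ E, e ∩ W ⊆ σ ∧ f = e \ W}

lemma mem_inducedEdges {E : Set (Finset ℕ)} {V e : Finset ℕ} :
    e ∈ inducedEdges E V ↔ e ⊆ V ∧ e ∈ E := by
  classical
  simp [inducedEdges]

lemma indepCount_le_s7 (V : Finset ℕ) (E : Finset (Finset ℕ)) :
    indepCount V E ≤ 2 ^ V.card := by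
  classical
  calc indepCount V E ≤ V.powerset.card := card_filter_le _ _
  _ = 2 ^ V.card := card_powerset V

lemma dens_nonneg (E : Set (Finset ℕ)) (V : Finset ℕ) : 0 ≤ hdens E V := by
  unfold hdens indepDensity
  positivity

lemma dens_le_one (E : Set (Finset ℕ)) (V : Finset ℕ) : hdens E V ≤ 1 := by
  unfold hdens indepDensity
  rw [div_le_one (by positivity)]
  exact_mod_cast Nat.cast_le.mpr (indepCount_le_s7 V _) |>.trans_eq (by push_cast; ring)

lemma bddBelow_dens (E : Set (Finset ℕ)) : BddBelow (Set.range fun F => hdens E F) := by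
  exact ⟨0, by rintro x ⟨F, rfl⟩; exact dens_nonneg E F⟩

lemma ID_le (E : Set (Finset ℕ)) (F : Finset ℕ) : ID E ≤ hdens E F :=
  ciInf_le (bddBelow_dens E) F

lemma ID_nonneg (E : Set (Finset ℕ)) : 0 ≤ ID E :=
  le_ciInf fun F => dens_nonneg E F

lemma dens_anti (E : Set (Finset ℕ)) {V V' : Finset ℕ} (h : V ⊆ V') :
    hdens E V' ≤ hdens E V := by
  classical
  have hcount : indepCount V' (inducedEdges E V')
      ≤ indepCount V (inducedEdges E V) * 2 ^ (V' \ V).card := by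
    unfold indepCount
    rw [← card_powerset (V' \ V), ← card_product]
    apply card_le_card_of_injOn (fun S => (S ∩ V, S \ V))
    · intro S hS
      simp only [mem_coe, mem_filter, mem_powerset] at hS
      obtain ⟨hSV', hind⟩ := hS
      simp only [mem_coe, mem_product, mem_filter, mem_powerset]
      refine ⟨⟨inter_subset_right, ?_⟩, sdiff_subset_sdiff hSV' le_rfl⟩
      intro e he hsub
      rw [mem_inducedEdges] at he
      exact hind e (mem_inducedEdges.mpr ⟨he.1.trans h, he.2⟩)
        (hsub.trans inter_subset_left)
    · intro S hS T hT hST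
      have h1 : S \ V ∪ S ∩ V = T \ V ∪ T ∩ V := by
        rw [(Prod.mk.injEq _ _ _ _).mp hST |>.1, (Prod.mk.injEq _ _ _ _).mp hST |>.2]
      rwa [sdiff_union_inter, sdiff_union_inter] at h1
  unfold hdens indepDensity
  rw [div_le_div_iff₀ (by positivity) (by positivity)]
  have h2 : (2:ℝ) ^ V'.card = 2 ^ V.card * 2 ^ (V' \ V).card := by
    rw [← pow_add, card_sdiff_of_subset h, ← Nat.add_sub_assoc (card_le_card h),
      Nat.add_sub_cancel_left]
  rw [h2]
  have h3 : (indepCount V' (inducedEdges E V') : ℝ)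
      ≤ indepCount V (inducedEdges E V) * 2 ^ (V' \ V).card := by
    exact_mod_cast hcount
  calc (indepCount V' (inducedEdges E V') : ℝ) * 2 ^ V.card
      ≤ (indepCount V (inducedEdges E V) * 2 ^ (V' \ V).card) * 2 ^ V.card :=
        mul_le_mul_of_nonneg_right h3 (by positivity)
    _ = indepCount V (inducedEdges E V) * (2 ^ V.card * 2 ^ (V' \ V).card) := by ring

lemma count_partition (E : Set (Finset ℕ)) {W V : Finset ℕ} (hWV : W ⊆ V) :
    indepCount V (inducedEdges E V)
      = ∑ σ ∈ W.powerset, indepCount (V \ W) (inducedEdges (hcond E W σ) (V \ W)) := by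
  classical
  unfold indepCount
  rw [card_eq_sum_card_fiberwise (f := fun S => S ∩ W) (t := W.powerset)
    (fun S _ => mem_powerset.mpr inter_subset_right)]
  refine Finset.sum_congr rfl fun σ hσ => ?_
  rw [mem_powerset] at hσ
  refine Finset.card_bij' (fun S _ => S \ W) (fun T _ => T ∪ σ) ?_ ?_ ?_ ?_
  · intro S hS
    simp only [mem_filter, mem_powerset] at hS
    obtain ⟨⟨hSV, hind⟩, hfib⟩ := hS
    simp only [mem_filter, mem_powerset]
    refine ⟨sdiff_subset_sdiff hSV le_rfl, ?_⟩
    intro f hf hfsub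
    rw [mem_inducedEdges] at hf
    obtain ⟨hfV, e, heE, heW, rfl⟩ := hf
    refine hind e (mem_inducedEdges.mpr ⟨?_, heE⟩) ?_
    · intro x hx
      by_cases hxW : x ∈ W
      · exact hWV hxW
      · exact (sdiff_subset (s := V) (t := W)) (hfV (mem_sdiff.mpr ⟨hx, hxW⟩))
    · intro x hx
      by_cases hxW : x ∈ W
      · have : x ∈ σ := heW (mem_inter.mpr ⟨hx, hxW⟩)
        rw [← hfib] at this
        exact (mem_inter.mp this).1
      · exact (sdiff_subset (s := S) (t := W)) (hfsub (mem_sdiff.mpr ⟨hx, hxW⟩))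
  · intro T hT
    simp only [mem_filter, mem_powerset] at hT
    obtain ⟨hTV, hind⟩ := hT
    have hTW : Disjoint T W := disjoint_of_subset_left hTV sdiff_disjoint
    simp only [mem_filter, mem_powerset]
    refine ⟨⟨?_, ?_⟩, ?_⟩
    · exact union_subset (hTV.trans sdiff_subset) (hσ.trans hWV)
    · intro e he hesub
      rw [mem_inducedEdges] at he
      obtain ⟨heV, heE⟩ := he
      have hfmem : e \ W ∈ hcond E W σ := ⟨e, heE, ?_, rfl⟩
      · refine hind (e \ W) (mem_inducedEdges.mpr ⟨sdiff_subset_sdiff heV le_rfl, hfmem⟩) ?_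
        intro x hx
        replace hx := mem_sdiff.mp hx
        rcases mem_union.mp (hesub hx.1) with h1 | h1
        · exact h1
        · exact absurd (hσ h1) hx.2
      · intro x hx
        rw [mem_inter] at hx
        rcases mem_union.mp (hesub hx.1) with h1 | h1
        · exact absurd (hTW.forall_ne_finset h1 hx.2 rfl) (fun h => h)
        · exact h1
    · rw [union_inter_distrib_right, inter_eq_left.mpr hσ,
        disjoint_iff_inter_eq_empty.mp hTW, empty_union]
  · intro S hS
    simp only [mem_filter, mem_powerset] at hS
    show S \ W ∪ σ = S
    rw [← hS.2, sdiff_union_inter]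
  · intro T hT
    simp only [mem_filter, mem_powerset] at hT
    have hTW : Disjoint T W := disjoint_of_subset_left hT.1 sdiff_disjoint
    show (T ∪ σ) \ W = T
    rw [union_sdiff_distrib, sdiff_eq_empty_iff_subset.mpr hσ, union_empty,
      sdiff_eq_self_of_disjoint hTW]

lemma dens_free (E' : Set (Finset ℕ)) (W : Finset ℕ)
    (hE : ∀ f ∈ E', Disjoint f W) (U : Finset ℕ) :
    hdens E' U = hdens E' (U \ W) := by
  classical
  have hc : ∀ σ : Finset ℕ, hcond E' (U ∩ W) σ = E' := by
    intro σ
    ext f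
    constructor
    · rintro ⟨e, heE, -, rfl⟩
      have hd : Disjoint e (U ∩ W) := (hE e heE).mono_right inter_subset_right
      rwa [sdiff_eq_self_of_disjoint hd]
    · intro hf
      have hd : Disjoint f (U ∩ W) := (hE f hf).mono_right inter_subset_right
      exact ⟨f, hf, by rw [disjoint_iff_inter_eq_empty.mp hd]; exact empty_subset σ,
        (sdiff_eq_self_of_disjoint hd).symm⟩
  have h1 := count_partition E' (inter_subset_left : U ∩ W ⊆ U)
  simp only [hc, sdiff_inter_self_left] at h1
  rw [Finset.sum_const, card_powerset] at h1
  unfold hdens indepDensity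
  rw [h1]
  have hcard : (U \ W).card + (U ∩ W).card = U.card := card_sdiff_add_card_inter U W
  rw [← hcard, pow_add]
  field_simp
  norm_num

lemma exists_superset_chain (V : ℕ → Finset ℕ) (hV : Monotone V)
    (hVU : (⋃ n, (V n : Set ℕ)) = Set.univ) (F : Finset ℕ) : ∃ n, F ⊆ V n := by
  have hx : ∀ x : ℕ, ∃ n, x ∈ V n := by
    intro x
    have hm : (x : ℕ) ∈ ⋃ n, (V n : Set ℕ) := by rw [hVU]; trivial
    simpa using hm
  choose g hg using hx
  exact ⟨F.sup g, fun x hxF => hV (Finset.le_sup hxF) (hg x)⟩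

lemma iInf_dens_chain (E : Set (Finset ℕ)) (V : ℕ → Finset ℕ) (hV : Monotone V)
    (hVU : (⋃ n, (V n : Set ℕ)) = Set.univ) :
    ⨅ n, hdens E (V n) = ID E := by
  apply le_antisymm
  · refine le_ciInf fun F => ?_
    obtain ⟨n, hn⟩ := exists_superset_chain V hV hVU F
    exact ciInf_le_of_le ⟨0, by rintro x ⟨m, rfl⟩; exact dens_nonneg E (V m)⟩ n
      (dens_anti E hn)
  · exact le_ciInf fun n => ciInf_le (bddBelow_dens E) (V n)

lemma tendsto_dens_chain (E : Set (Finset ℕ)) (V : ℕ → Finset ℕ) (hV : Monotone V)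
    (hVU : (⋃ n, (V n : Set ℕ)) = Set.univ) :
    Tendsto (fun n => hdens E (V n)) atTop (nhds (ID E)) := by
  rw [← iInf_dens_chain E V hV hVU]
  exact tendsto_atTop_ciInf (fun a b h => dens_anti E (hV h))
    ⟨0, by rintro x ⟨m, rfl⟩; exact dens_nonneg E (V m)⟩

lemma ID_recursion (E : Set (Finset ℕ)) (W : Finset ℕ) :
    ID E = (2:ℝ)⁻¹ ^ W.card * ∑ σ ∈ W.powerset, ID (hcond E W σ) := by
  classical
  have hmono : Monotone (fun n => Finset.range n) := fun a b h => range_subset_range.mpr h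
  have hunion : (⋃ n, ((Finset.range n : Finset ℕ) : Set ℕ)) = Set.univ := by
    ext x
    simp only [Set.mem_iUnion, coe_range, Set.mem_Iio, Set.mem_univ, iff_true]
    exact ⟨x + 1, Nat.lt_succ_self x⟩
  have hA : Tendsto (fun n => hdens E (Finset.range n)) atTop (nhds (ID E)) :=
    tendsto_dens_chain E _ hmono hunion
  have hAσ : ∀ σ : Finset ℕ, Tendsto (fun n => hdens (hcond E W σ) (Finset.range n))
      atTop (nhds (ID (hcond E W σ))) :=
    fun σ => tendsto_dens_chain _ _ hmono hunion
  have key : ∀ n, hdens E (Finset.range n ∪ W)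
      = (2:ℝ)⁻¹ ^ W.card * ∑ σ ∈ W.powerset, hdens (hcond E W σ) (Finset.range n) := by
    intro n
    have hfree : ∀ σ ∈ W.powerset, hdens (hcond E W σ) (Finset.range n)
        = hdens (hcond E W σ) (Finset.range n \ W) := by
      intro σ _
      refine dens_free _ W ?_ _
      rintro f ⟨e, -, -, rfl⟩
      exact sdiff_disjoint
    rw [Finset.sum_congr rfl hfree]
    have h1 := count_partition E (subset_union_right : W ⊆ Finset.range n ∪ W)
    have hsd : (Finset.range n ∪ W) \ W = Finset.range n \ W := union_sdiff_right _ _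
    have hcardU : (Finset.range n ∪ W).card = (Finset.range n \ W).card + W.card := by
      rw [← sdiff_union_self_eq_union, card_union_of_disjoint sdiff_disjoint]
    unfold hdens indepDensity
    rw [h1, hsd, hcardU, Nat.cast_sum, Finset.sum_div, Finset.mul_sum]
    refine Finset.sum_congr rfl fun σ _ => ?_
    rw [pow_add]
    ring_nf
    simp only [one_div]
  have hev : ∀ᶠ n in atTop, hdens E (Finset.range n) = hdens E (Finset.range n ∪ W) := by
    refine eventually_atTop.mpr ⟨W.sup id + 1, fun n hn => ?_⟩
    have hWr : W ⊆ Finset.range n := by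
      intro x hx
      exact mem_range.mpr (lt_of_lt_of_le (Nat.lt_succ_of_le (Finset.le_sup (f := id) hx)) hn)
    rw [union_eq_left.mpr hWr]
  have hB : Tendsto (fun n => hdens E (Finset.range n ∪ W)) atTop (nhds (ID E)) :=
    Tendsto.congr' hev hA
  have hC : Tendsto (fun n => hdens E (Finset.range n ∪ W)) atTop
      (nhds ((2:ℝ)⁻¹ ^ W.card * ∑ σ ∈ W.powerset, ID (hcond E W σ))) := by
    simp only [key]
    exact Tendsto.const_mul _ (tendsto_finset_sum _ fun σ _ => hAσ σ)
  exact tendsto_nhds_unique hB hC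

lemma ID_zero_of_empty_mem (E : Set (Finset ℕ)) (h : ∅ ∈ E) : ID E = 0 := by
  classical
  have hd : ∀ V, hdens E V = 0 := by
    intro V
    unfold hdens indepDensity indepCount
    have hempty : (V.powerset.filter fun S => ∀ e ∈ inducedEdges E V, ¬ e ⊆ S) = ∅ := by
      refine filter_eq_empty_iff.mpr fun S _ => ?_
      push_neg
      exact ⟨∅, mem_inducedEdges.mpr ⟨empty_subset V, h⟩, empty_subset S⟩
    rw [hempty]
    simp
  unfold ID
  simp only [hd, ciInf_const]

lemma ID_of_no_edges (E : Set (Finset ℕ)) (h : ∀ V, inducedEdges E V = ∅) : ID E = 1 := by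
  classical
  have hd : ∀ V, hdens E V = 1 := by
    intro V
    unfold hdens indepDensity indepCount
    rw [h V]
    have hall : (V.powerset.filter fun S => ∀ e ∈ (∅ : Finset (Finset ℕ)), ¬ e ⊆ S)
        = V.powerset := filter_true_of_mem (by simp)
    rw [hall, card_powerset]
    rw [Nat.cast_pow, Nat.cast_ofNat, div_self (by positivity)]
  unfold ID
  simp only [hd, ciInf_const]

lemma matching_bound (E : Set (Finset ℕ)) (k : ℕ) (hcard : ∀ e ∈ E, e.card ≤ k)
    (M : Finset (Finset ℕ)) (hME : ↑M ⊆ E)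
    (hdisj : (M : Set (Finset ℕ)).Pairwise (fun a b => Disjoint a b)) :
    hdens E (M.biUnion id) ≤ (1 - (2:ℝ)⁻¹ ^ k) ^ M.card := by
  classical
  set V := M.biUnion id with hVdef
  have hcount : indepCount V (inducedEdges E V) ≤ (M.pi fun e => e.powerset.erase e).card := by
    unfold indepCount
    apply card_le_card_of_injOn (fun S => fun e _ => S ∩ e)
    · intro S hS
      simp only [mem_coe, mem_filter, mem_powerset] at hS
      obtain ⟨hSV, hind⟩ := hS
      rw [mem_coe, Finset.mem_pi]
      intro e he
      rw [mem_erase, mem_powerset]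
      refine ⟨fun hcontra => ?_, inter_subset_right⟩
      exact hind e (mem_inducedEdges.mpr ⟨subset_biUnion_of_mem id he, hME he⟩)
        (inter_eq_right.mp hcontra)
    · intro S hS T hT hST
      simp only [mem_coe, mem_filter, mem_powerset] at hS hT
      have hSr : S = M.biUnion fun e => S ∩ e := by
        ext x
        simp only [mem_biUnion, mem_inter]
        constructor
        · intro hx
          obtain ⟨e, he, hxe⟩ := mem_biUnion.mp (hS.1 hx)
          exact ⟨e, he, hx, hxe⟩
        · rintro ⟨e, he, hx, -⟩; exact hx
      have hTr : T = M.biUnion fun e => T ∩ e := by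
        ext x
        simp only [mem_biUnion, mem_inter]
        constructor
        · intro hx
          obtain ⟨e, he, hxe⟩ := mem_biUnion.mp (hT.1 hx)
          exact ⟨e, he, hx, hxe⟩
        · rintro ⟨e, he, hx, -⟩; exact hx
      rw [hSr, hTr]
      exact biUnion_congr rfl fun e he => congrFun (congrFun hST e) he
  have hpi : ((M.pi fun e => e.powerset.erase e).card : ℝ)
      = ∏ e ∈ M, ((2:ℝ) ^ e.card - 1) := by
    rw [Finset.card_pi, Nat.cast_prod]
    refine Finset.prod_congr rfl fun e he => ?_
    rw [card_erase_of_mem (mem_powerset_self e), card_powerset]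
    have h1 : (1:ℕ) ≤ 2 ^ e.card := Nat.one_le_two_pow
    push_cast [Nat.cast_sub h1]
    ring
  have hVcard : V.card = ∑ e ∈ M, e.card := by
    rw [hVdef]
    exact card_biUnion fun x hx y hy hxy => hdisj hx hy hxy
  unfold hdens indepDensity
  rw [hVcard, div_le_iff₀ (by positivity)]
  have h2 : (2:ℝ) ^ (∑ e ∈ M, e.card) = ∏ e ∈ M, (2:ℝ) ^ e.card := by
    rw [← Finset.prod_pow_eq_pow_sum]
  calc (indepCount V (inducedEdges E V) : ℝ)
      ≤ ∏ e ∈ M, ((2:ℝ) ^ e.card - 1) := by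
        rw [← hpi]; exact_mod_cast hcount
    _ ≤ ∏ e ∈ M, ((1 - (2:ℝ)⁻¹ ^ k) * 2 ^ e.card) := by
        refine Finset.prod_le_prod (fun e he => ?_) (fun e he => ?_)
        · have h1 : (1:ℝ) ≤ 2 ^ e.card := by exact_mod_cast (Nat.one_le_two_pow : 1 ≤ 2 ^ e.card)
          linarith
        · have hek : e.card ≤ k := hcard e (hME he)
          have h3 : (2:ℝ) ^ e.card ≤ 2 ^ k := pow_le_pow_right₀ (by norm_num) hek
          have h4 : (2:ℝ)⁻¹ ^ k * 2 ^ e.card ≤ 1 := by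
            rw [inv_pow, inv_mul_le_iff₀ (by positivity)]
            simpa using h3
          nlinarith
    _ = (1 - (2:ℝ)⁻¹ ^ k) ^ M.card * 2 ^ (∑ e ∈ M, e.card) := by
        rw [Finset.prod_mul_distrib, Finset.prod_const, h2]

lemma exists_matching (E : Set (Finset ℕ)) (hne : ∅ ∉ E)
    (h : ¬ ∃ W : Finset ℕ, ∀ e ∈ E, (e ∩ W).Nonempty) (m : ℕ) :
    ∃ M : Finset (Finset ℕ), ↑M ⊆ E ∧
      (M : Set (Finset ℕ)).Pairwise (fun a b => Disjoint a b) ∧ M.card = m := by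
  classical
  induction m with
  | zero => exact ⟨∅, by simp, by simp, rfl⟩
  | succ m ih =>
    obtain ⟨M, hME, hdisj, hMc⟩ := ih
    push_neg at h
    obtain ⟨e, heE, heW⟩ := h (M.sup id)
    have hdis : ∀ f ∈ M, Disjoint e f := by
      intro f hf
      refine disjoint_iff_inter_eq_empty.mpr (subset_empty.mp ?_)
      rw [← heW]
      exact inter_subset_inter le_rfl (Finset.le_sup (f := id) hf)
    have heM : e ∉ M := by
      intro hmem
      have hde : Disjoint e e := hdis e hmem
      have hene : e ≠ ∅ := fun h0 => hne (h0 ▸ heE)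
      exact hene (disjoint_self.mp hde)
    refine ⟨insert e M, ?_, ?_, ?_⟩
    · intro f hf
      rw [coe_insert] at hf
      rcases Set.mem_insert_iff.mp hf with rfl | h1
      · exact heE
      · exact hME h1
    · rw [coe_insert]
      rw [Set.pairwise_insert]
      refine ⟨hdisj, fun f hf _ => ⟨hdis f hf, (hdis f hf).symm⟩⟩
    · rw [card_insert_of_notMem heM, hMc]

lemma ID_rat (k : ℕ) : ∀ E : Set (Finset ℕ), (∀ e ∈ E, e.card ≤ k) →
    ∃ q : ℚ, ID E = q := by
  classical
  induction k with
  | zero =>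
    intro E hE
    by_cases h : ∅ ∈ E
    · exact ⟨0, by rw [ID_zero_of_empty_mem E h]; norm_num⟩
    · refine ⟨1, ?_⟩
      rw [ID_of_no_edges E fun V => ?_]
      · norm_num
      · rw [eq_empty_iff_forall_notMem]
        intro e he
        rw [mem_inducedEdges] at he
        exact h (card_eq_zero.mp (Nat.le_zero.mp (hE e he.2)) ▸ he.2)
  | succ k ih =>
    intro E hE
    by_cases h0 : ∅ ∈ E
    · exact ⟨0, by rw [ID_zero_of_empty_mem E h0]; norm_num⟩
    by_cases h : ∃ W : Finset ℕ, ∀ e ∈ E, (e ∩ W).Nonempty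
    · obtain ⟨W, hW⟩ := h
      have hc : ∀ σ : Finset ℕ, ∃ q : ℚ, ID (hcond E W σ) = q := by
        intro σ
        apply ih
        rintro f ⟨e, heE, -, rfl⟩
        have h1 : 1 ≤ (e ∩ W).card := card_pos.mpr (hW e heE)
        have h2 : (e \ W).card + (e ∩ W).card = e.card := card_sdiff_add_card_inter e W
        have h3 : e.card ≤ k + 1 := hE e heE
        omega
      choose q hq using hc
      refine ⟨(2:ℚ)⁻¹ ^ W.card * ∑ σ ∈ W.powerset, q σ, ?_⟩
      rw [ID_recursion E W, Finset.sum_congr rfl fun σ _ => hq σ]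
      push_cast
      norm_num
    · refine ⟨0, ?_⟩
      have hub : ∀ m : ℕ, ID E ≤ (1 - (2:ℝ)⁻¹ ^ (k+1)) ^ m := by
        intro m
        obtain ⟨M, hME, hdisj, hMc⟩ := exists_matching E h0 h m
        calc ID E ≤ hdens E (M.biUnion id) := ID_le E _
          _ ≤ (1 - (2:ℝ)⁻¹ ^ (k+1)) ^ M.card := matching_bound E (k+1) hE M hME hdisj
          _ = (1 - (2:ℝ)⁻¹ ^ (k+1)) ^ m := by rw [hMc]
      have hge : (0:ℝ) ≤ 1 - (2:ℝ)⁻¹ ^ (k+1) := by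
        have : (2:ℝ)⁻¹ ^ (k+1) ≤ 1 := pow_le_one₀ (by norm_num) (by norm_num)
        linarith
      have hlt : 1 - (2:ℝ)⁻¹ ^ (k+1) < 1 := by
        have : (0:ℝ) < (2:ℝ)⁻¹ ^ (k+1) := by positivity
        linarith
      have htend : Tendsto (fun m => (1 - (2:ℝ)⁻¹ ^ (k+1)) ^ m) atTop (nhds 0) :=
        tendsto_pow_atTop_nhds_zero_of_lt_one hge hlt
      have hle0 : ID E ≤ 0 := ge_of_tendsto htend (Eventually.of_forall hub)
      rw [Rat.cast_zero]
      exact le_antisymm hle0 (ID_nonneg E)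

/-- For every countable hypergraph `H` (on vertex set `ℕ`, with hyperedge set
`E`) whose hyperedges all have cardinality at most a fixed positive integer
`k`, the independence density of `H` — the limit of the finite independence
densities along any chain exhausting the vertex set — is rational. -/
theorem indepDensity_rational_of_bounded_edges (E : Set (Finset ℕ)) (k : ℕ)
    (hk : 0 < k) (hcard : ∀ e ∈ E, e.card ≤ k)
    (V : ℕ → Finset ℕ) (hV : Monotone V)
    (hVU : (⋃ n, (V n : Set ℕ)) = Set.univ) (L : ℝ)
    (hL : Tendsto (fun n => indepDensity (V n) (inducedEdges E (V n))) atTop (nhds L)) :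
    ∃ q : ℚ, L = q := by
  obtain ⟨q, hq⟩ := ID_rat k E hcard
  have := tendsto_dens_chain E V hV hVU
  have hLid : L = ID E := tendsto_nhds_unique hL this
  exact ⟨q, hLid.trans hq⟩
end

section
/- Euler's Pentagonal Number Theorem: for real q with |q| < 1, Π_{k≥1}(1 - q^k) = Σ_{k=-∞}^{∞} (-1)^k q^{k(3k+1)/2} = 1 + Σ_{k≥1} (-1)^k (q^{k(3k+1)/2} + q^{k(3k-1)/2}). -/
open Filter Finset

/-- Triangle numbers. -/
def pentTri : ℕ → ℕ
  | 0 => 0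
  | (j+1) => pentTri j + (j+1)

lemma two_pentTri (j : ℕ) : 2 * pentTri j = j * (j + 1) := by
  induction j with
  | zero => rfl
  | succ j ih =>
    show 2 * (pentTri j + (j+1)) = _
    rw [Nat.mul_add, ih]; ring

/-- The finite Shanks-type identity. -/
lemma pent_finite (q : ℝ) (n : ℕ) :
    1 + ∑ j ∈ range n, ((-1:ℝ)^(j+1) *
        (q ^ (pentTri (j+1) + (j+1)*(j+1)) + q ^ (pentTri j + (j+1)*(j+1)))) =
    (∏ k ∈ Ico 1 (n+1), (1 - q^k)) +
    ∑ j ∈ range n, ((-1:ℝ)^(j+1) * q ^ ((j+1)*(n+1) + pentTri j) *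
        ∏ k ∈ Ico (j+2) (n+1), (1 - q^k)) := by
  induction n with
  | zero => simp
  | succ n ih =>
    -- the telescoping witness
    set W : ℕ → ℝ := fun j => (-1:ℝ)^(j+1) * q ^ ((j+1)*(n+1) + pentTri j) *
        ∏ k ∈ Ico (j+1) (n+1), (1 - q^k) with hW
    have key : ∀ j ∈ range n,
        (-1:ℝ)^(j+1) * q ^ ((j+1)*(n+2) + pentTri j) * ∏ k ∈ Ico (j+2) (n+2), (1 - q^k)
        - (-1:ℝ)^(j+1) * q ^ ((j+1)*(n+1) + pentTri j) * ∏ k ∈ Ico (j+2) (n+1), (1 - q^k)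
        = W (j+1) - W j := by
      intro j hj
      rw [mem_range] at hj
      have h1 : j + 2 ≤ n + 1 := by omega
      rw [Finset.prod_Ico_succ_top h1]
      have h2 : (j+1)*(n+2) + pentTri j = ((j+1)*(n+1) + pentTri j) + (j+1) := by ring
      rw [h2]
      simp only [hW]
      rw [Finset.prod_eq_prod_Ico_succ_bot (by omega : j + 1 < n + 1)]
      have h3 : (j+1+1)*(n+1) + pentTri (j+1)
          = ((j+1)*(n+1) + pentTri j) + (j+1) + (n+1) := by
        show (j+1+1)*(n+1) + (pentTri j + (j+1)) = _
        ring
      rw [h3]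
      ring
    rw [Finset.sum_range_succ, Finset.sum_range_succ]
    have hsplit : ∑ j ∈ range n,
        ((-1:ℝ)^(j+1) * q ^ ((j+1)*(n+2) + pentTri j) * ∏ k ∈ Ico (j+2) (n+2), (1 - q^k))
        = (∑ j ∈ range n, ((-1:ℝ)^(j+1) * q ^ ((j+1)*(n+1) + pentTri j) *
            ∏ k ∈ Ico (j+2) (n+1), (1 - q^k))) + (W n - W 0) := by
      rw [← Finset.sum_range_sub W n, ← Finset.sum_add_distrib]
      refine Finset.sum_congr rfl ?_
      intro j hj
      have := key j hj
      linarith [this]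
    rw [hsplit]
    have hWn : W n = (-1:ℝ)^(n+1) * q ^ (pentTri n + (n+1)*(n+1)) := by
      simp only [hW, Ico_self, Finset.prod_empty, mul_one]
      congr 2
      ring
    have hW0 : W 0 = -(q^(n+1) * ∏ k ∈ Ico 1 (n+1), (1 - q^k)) := by
      simp only [hW]
      norm_num [pentTri]
    have hlast : (-1:ℝ)^(n+1) * q ^ ((n+1)*(n+2) + pentTri n) * ∏ k ∈ Ico (n+2) (n+2), (1 - q^k)
        = (-1:ℝ)^(n+1) * q ^ (pentTri (n+1) + (n+1)*(n+1)) := by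
      simp only [Ico_self, Finset.prod_empty, mul_one]
      congr 2
      show (n+1)*(n+2) + pentTri n = (pentTri n + (n+1)) + (n+1)*(n+1)
      ring
    have hprod : (∏ k ∈ Ico 1 (n+1+1), (1 - q^k))
        = (∏ k ∈ Ico 1 (n+1), (1 - q^k)) * (1 - q^(n+1)) := by
      rw [Finset.prod_Ico_succ_top (by omega)]
    rw [hlast, hWn, hW0, hprod]
    linarith [ih]

lemma pent_expA (k : ℕ) : (k + 1) * (3 * (k + 1) + 1) / 2 = pentTri (k+1) + (k+1)*(k+1) := by
  have h : (k + 1) * (3 * (k + 1) + 1) = 2 * (pentTri (k+1) + (k+1)*(k+1)) := by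
    have := two_pentTri (k+1)
    nlinarith [this]
  rw [h, Nat.mul_div_cancel_left _ (by norm_num)]

lemma pent_expB (k : ℕ) : (k + 1) * (3 * (k + 1) - 1) / 2 = pentTri k + (k+1)*(k+1) := by
  have h0 : 3 * (k+1) - 1 = 3*k + 2 := by omega
  have h : (k + 1) * (3 * k + 2) = 2 * (pentTri k + (k+1)*(k+1)) := by
    have := two_pentTri k
    nlinarith [this]
  rw [h0, h, Nat.mul_div_cancel_left _ (by norm_num)]

/-- Euler's Pentagonal Number Theorem: for real `q` with `|q| < 1`,
`Π_{k≥1}(1 - q^k) = Σ_{k=-∞}^{∞} (-1)^k q^{k(3k+1)/2}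
  = 1 + Σ_{k≥1} (-1)^k (q^{k(3k+1)/2} + q^{k(3k-1)/2})`. -/
theorem euler_pentagonal_number_theorem (q : ℝ) (hq : |q| < 1) :
    ∃ S : ℝ,
      HasSum (fun k : ℤ =>
        (-1 : ℝ) ^ k * q ^ (k * (3 * k + 1) / 2).toNat) S ∧
      HasSum (fun k : ℕ =>
        (-1 : ℝ) ^ (k + 1) *
          (q ^ ((k + 1) * (3 * (k + 1) + 1) / 2) +
           q ^ ((k + 1) * (3 * (k + 1) - 1) / 2))) (S - 1) ∧
      Tendsto (fun N => ∏ k ∈ Finset.range N, (1 - q ^ (k + 1)))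
        atTop (nhds S) := by
  have hq0 : (0:ℝ) ≤ |q| := abs_nonneg q
  set r := |q| with hr
  -- the two half series
  set u : ℕ → ℝ := fun k => (-1:ℝ)^(k+1) * q ^ (pentTri (k+1) + (k+1)*(k+1)) with hu
  set v : ℕ → ℝ := fun k => (-1:ℝ)^(k+1) * q ^ (pentTri k + (k+1)*(k+1)) with hv
  have hgeom : Summable (fun k : ℕ => r ^ (k+1)) := by
    exact (summable_geometric_of_lt_one hq0 hq).comp_injective (add_left_injective 1)
  have hub : ∀ k, ‖u k‖ ≤ r ^ (k+1) := by
    intro k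
    have h1 : k + 1 ≤ pentTri (k+1) + (k+1)*(k+1) := by nlinarith [two_pentTri (k+1)]
    calc ‖u k‖ = r ^ (pentTri (k+1) + (k+1)*(k+1)) := by
          simp [hu, abs_mul, abs_pow, abs_neg, abs_one, hr]
      _ ≤ r ^ (k+1) := pow_le_pow_of_le_one hq0 hq.le h1
  have hvb : ∀ k, ‖v k‖ ≤ r ^ (k+1) := by
    intro k
    have h1 : k + 1 ≤ pentTri k + (k+1)*(k+1) := by nlinarith
    calc ‖v k‖ = r ^ (pentTri k + (k+1)*(k+1)) := by
          simp [hv, abs_mul, abs_pow, abs_neg, abs_one, hr]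
      _ ≤ r ^ (k+1) := pow_le_pow_of_le_one hq0 hq.le h1
  have hus : Summable u := Summable.of_norm_bounded hgeom hub
  have hvs : Summable v := Summable.of_norm_bounded hgeom hvb
  obtain ⟨U, hU⟩ := hus
  obtain ⟨V, hV⟩ := hvs
  refine ⟨1 + (U + V), ?_, ?_, ?_⟩
  · -- the ℤ-indexed sum
    set f : ℕ → ℝ := fun n => (-1:ℝ)^n * q ^ (((n:ℤ) * (3 * (n:ℤ) + 1) / 2)).toNat with hf
    have heq : ∀ n : ℕ, (((n:ℤ) * (3 * (n:ℤ) + 1) / 2)).toNat = n * (3 * n + 1) / 2 := by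
      intro n
      have h : ((n:ℤ) * (3 * (n:ℤ) + 1)) = ((n * (3 * n + 1) : ℕ) : ℤ) := by push_cast; ring
      rw [h, show ((2:ℤ)) = ((2:ℕ):ℤ) from rfl, ← Int.natCast_div, Int.toNat_natCast]
    have hshift : HasSum (fun n : ℕ => f (n+1)) U := by
      have he : (fun n : ℕ => f (n+1)) = u := by
        funext n
        rw [hf]
        simp only
        rw [heq (n+1), pent_expA n, hu]
      rw [he]
      exact hU
    have hfsum : HasSum f (U + 1) := by
      have := (hasSum_nat_add_iff (f := f) 1).mp hshift
      have h0 : ∑ i ∈ range 1, f i = 1 := by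
        rw [hf]; simp
      rwa [h0] at this
    have hneg : HasSum (fun n : ℕ =>
        (-1:ℝ) ^ (Int.negSucc n) * q ^ (((Int.negSucc n) * (3 * (Int.negSucc n) + 1) / 2)).toNat) V := by
      have he : (fun n : ℕ =>
          (-1:ℝ) ^ (Int.negSucc n) * q ^ (((Int.negSucc n) * (3 * (Int.negSucc n) + 1) / 2)).toNat)
          = v := by
        funext n
        have e1 : ((Int.negSucc n) * (3 * (Int.negSucc n) + 1) / 2).toNat
            = pentTri n + (n+1)*(n+1) := by
          have h : ((Int.negSucc n) * (3 * (Int.negSucc n) + 1))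
              = (((n+1) * (3 * (n+1) - 1) : ℕ) : ℤ) := by
            rw [Int.negSucc_eq]
            have h0 : (n+1) * (3 * (n+1) - 1) = (n+1) * (3*n+2) := by
              congr 1
            rw [h0]
            push_cast
            ring
          rw [h, show ((2:ℤ)) = ((2:ℕ):ℤ) from rfl, ← Int.natCast_div, Int.toNat_natCast,
            pent_expB n]
        have e2 : (-1:ℝ) ^ (Int.negSucc n) = (-1:ℝ)^(n+1) := by
          rw [zpow_negSucc, ← inv_pow]
          norm_num
        rw [e1, e2, hv]
      rw [he]
      exact hV
    have hint := hfsum.int_rec hneg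
    have he : (fun k : ℤ => (-1 : ℝ) ^ k * q ^ (k * (3 * k + 1) / 2).toNat)
        = (fun t : ℤ => Int.rec f (fun n : ℕ =>
            (-1:ℝ) ^ (Int.negSucc n) * q ^ (((Int.negSucc n) * (3 * (Int.negSucc n) + 1) / 2)).toNat) t) := by
      funext k
      cases k with
      | ofNat n =>
        show _ = f n
        rw [hf]
        simp only [Int.ofNat_eq_coe]
        norm_num [zpow_natCast]
      | negSucc n => rfl
    rw [he, show (1:ℝ) + (U + V) = (U + 1) + V by ring]
    exact hint
  · -- the ℕ-indexed sum
    have hsum : HasSum (fun k : ℕ => u k + v k) (U + V) := hU.add hV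
    have he : (fun k : ℕ => (-1 : ℝ) ^ (k + 1) *
          (q ^ ((k + 1) * (3 * (k + 1) + 1) / 2) +
           q ^ ((k + 1) * (3 * (k + 1) - 1) / 2))) = fun k => u k + v k := by
      funext k
      rw [pent_expA, pent_expB, hu, hv]
      ring
    rw [he, show (1:ℝ) + (U + V) - 1 = U + V by ring]
    exact hsum
  · -- the product limit
    have hA : Tendsto (fun n => 1 + ∑ j ∈ range n, (u j + v j)) atTop (nhds (1 + (U + V))) := by
      exact tendsto_const_nhds.add (hU.add hV).tendsto_sum_nat
    -- the error term tends to 0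
    set E : ℕ → ℝ := fun n => ∑ j ∈ range n, ((-1:ℝ)^(j+1) * q ^ ((j+1)*(n+1) + pentTri j) *
        ∏ k ∈ Ico (j+2) (n+1), (1 - q^k)) with hE
    have hrg : Summable (fun k : ℕ => r ^ k) := summable_geometric_of_lt_one hq0 hq
    have hgs : ∀ n : ℕ, ∑ j ∈ range n, r ^ j ≤ (1 - r)⁻¹ := by
      intro n
      calc ∑ j ∈ range n, r ^ j ≤ ∑' k : ℕ, r ^ k :=
            Summable.sum_le_tsum _ (fun k _ => pow_nonneg hq0 k) hrg
        _ = (1 - r)⁻¹ := tsum_geometric_of_lt_one hq0 hq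
    have hC : ∀ a b : ℕ, ‖∏ k ∈ Ico a b, (1 - q^k)‖ ≤ Real.exp ((1 - r)⁻¹) := by
      intro a b
      calc ‖∏ k ∈ Ico a b, (1 - q^k)‖ = ∏ k ∈ Ico a b, |1 - q^k| := by
            rw [Real.norm_eq_abs, Finset.abs_prod]
        _ ≤ ∏ k ∈ Ico a b, Real.exp (r ^ k) := by
            refine Finset.prod_le_prod (fun k _ => abs_nonneg _) (fun k _ => ?_)
            calc |1 - q^k| ≤ |(1:ℝ)| + |q^k| := abs_sub _ _
              _ = r ^ k + 1 := by rw [abs_one, abs_pow]; ring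
              _ ≤ Real.exp (r ^ k) := Real.add_one_le_exp _
        _ = Real.exp (∑ k ∈ Ico a b, r ^ k) := (Real.exp_sum _ _).symm
        _ ≤ Real.exp ((1 - r)⁻¹) := by
            refine Real.exp_le_exp.mpr ?_
            calc ∑ k ∈ Ico a b, r ^ k ≤ ∑' k : ℕ, r ^ k :=
                  Summable.sum_le_tsum _ (fun k _ => pow_nonneg hq0 k) hrg
              _ = (1 - r)⁻¹ := tsum_geometric_of_lt_one hq0 hq
    have hEbound : ∀ n, ‖E n‖ ≤ Real.exp ((1 - r)⁻¹) * (1 - r)⁻¹ * r ^ (n+1) := by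
      intro n
      have step1 : ‖E n‖ ≤ ∑ j ∈ range n, Real.exp ((1 - r)⁻¹) * (r ^ (n+1) * r ^ j) := by
        refine (norm_sum_le _ _).trans (Finset.sum_le_sum (fun j _ => ?_))
        rw [norm_mul, norm_mul]
        have h1 : ‖(-1:ℝ)^(j+1)‖ = 1 := by
          rw [norm_pow, norm_neg, norm_one, one_pow]
        rw [h1, one_mul]
        have h2 : ‖q ^ ((j+1)*(n+1) + pentTri j)‖ ≤ r ^ (n+1) * r ^ j := by
          rw [Real.norm_eq_abs, abs_pow, ← hr, ← pow_add]
          refine pow_le_pow_of_le_one hq0 hq.le ?_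
          nlinarith [two_pentTri j]
        calc ‖q ^ ((j+1)*(n+1) + pentTri j)‖ * ‖∏ k ∈ Ico (j+2) (n+1), (1 - q^k)‖
            ≤ (r ^ (n+1) * r ^ j) * Real.exp ((1 - r)⁻¹) := by
              refine mul_le_mul h2 (hC _ _) (norm_nonneg _) ?_
              positivity
          _ = Real.exp ((1 - r)⁻¹) * (r ^ (n+1) * r ^ j) := by ring
      have step2 : ∑ j ∈ range n, Real.exp ((1 - r)⁻¹) * (r ^ (n+1) * r ^ j)
          ≤ Real.exp ((1 - r)⁻¹) * (1 - r)⁻¹ * r ^ (n+1) := by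
        have hfold : ∑ j ∈ range n, Real.exp ((1 - r)⁻¹) * (r ^ (n+1) * r ^ j)
            = (Real.exp ((1 - r)⁻¹) * r ^ (n+1)) * ∑ j ∈ range n, r ^ j := by
          rw [Finset.mul_sum]
          refine Finset.sum_congr rfl (fun j _ => ?_)
          ring
        rw [hfold]
        have h3 : (Real.exp ((1 - r)⁻¹) * r ^ (n+1)) * ∑ j ∈ range n, r ^ j
            ≤ (Real.exp ((1 - r)⁻¹) * r ^ (n+1)) * (1 - r)⁻¹ := by
          refine mul_le_mul_of_nonneg_left (hgs n) ?_
          positivity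
        calc (Real.exp ((1 - r)⁻¹) * r ^ (n+1)) * ∑ j ∈ range n, r ^ j
            ≤ (Real.exp ((1 - r)⁻¹) * r ^ (n+1)) * (1 - r)⁻¹ := h3
          _ = Real.exp ((1 - r)⁻¹) * (1 - r)⁻¹ * r ^ (n+1) := by ring
      exact step1.trans step2
    have hE0 : Tendsto E atTop (nhds 0) := by
      refine squeeze_zero_norm hEbound ?_
      have h1 : Tendsto (fun n : ℕ => r ^ (n+1)) atTop (nhds 0) :=
        (tendsto_pow_atTop_nhds_zero_of_lt_one hq0 hq).comp (tendsto_add_atTop_nat 1)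
      have := h1.const_mul (Real.exp ((1 - r)⁻¹) * (1 - r)⁻¹)
      simpa using this
    have hPeq : ∀ n : ℕ, (∏ k ∈ range n, (1 - q^(k+1)))
        = (1 + ∑ j ∈ range n, (u j + v j)) - E n := by
      intro n
      have hid := pent_finite q n
      have hprodshift : (∏ k ∈ Ico 1 (n+1), (1 - q^k)) = ∏ k ∈ range n, (1 - q^(k+1)) := by
        rw [Finset.prod_Ico_eq_prod_range]
        simp [add_comm]
      rw [hprodshift] at hid
      have hterm : ∀ j, u j + v j = (-1:ℝ)^(j+1) *
          (q ^ (pentTri (j+1) + (j+1)*(j+1)) + q ^ (pentTri j + (j+1)*(j+1))) := by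
        intro j; rw [hu, hv]; ring
      simp only [hterm]
      rw [hE]
      linarith [hid]
    have hfin : Tendsto (fun n => (1 + ∑ j ∈ range n, (u j + v j)) - E n) atTop
        (nhds ((1 + (U + V)) - 0)) := hA.sub hE0
    rw [sub_zero] at hfin
    exact hfin.congr (fun n => (hPeq n).symm)
end

section
/- For every real number r ∈ [0,1], there exists a countable hypergraph H (with all hyperedges finite) such that id(H) = r. That is, the set of independence densities of countable hypergraphs is exactly [0,1]. -/
open Finset Filter

open scoped Classical

namespace IndepAux

/-- the hyperedge attached to index `i` (when `¬ b i`). -/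
noncomputable def edgeOf (b : ℕ → Prop) (i : ℕ) : Finset ℕ :=
  insert i ((Finset.range i).filter b)

/-- the edge set of the hypergraph built from the bit sequence `b`. -/
def Eset (b : ℕ → Prop) : Set (Finset ℕ) := {e | ∃ i, ¬ b i ∧ e = edgeOf b i}

/-- the class of independent sets whose first "failure" is at `k`. -/
noncomputable def Ak (b : ℕ → Prop) (V : Finset ℕ) (k : ℕ) : Finset (Finset ℕ) :=
  V.powerset.filter (fun S => S ∩ Finset.range (k+1) = (Finset.range k).filter b)

noncomputable def Bset (b : ℕ → Prop) (V : Finset ℕ) (M : ℕ) : Finset (Finset ℕ) :=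
  V.powerset.filter (fun S => S ∩ Finset.range M = (Finset.range M).filter b)

lemma card_fixed (V W : Finset ℕ) (t : ℕ) (hW : W ⊆ Finset.range t)
    (ht : Finset.range t ⊆ V) :
    (V.powerset.filter (fun S => S ∩ Finset.range t = W)).card = 2 ^ (V.card - t) := by
  have key : (V.powerset.filter (fun S => S ∩ Finset.range t = W)).card
      = ((V \ Finset.range t).powerset).card := by
    apply Finset.card_bij' (fun S _ => S \ Finset.range t) (fun U _ => U ∪ W)
    · intro S hS
      simp only [mem_filter, mem_powerset] at hS
      simp only [mem_powerset]
      exact sdiff_subset_sdiff hS.1 (Finset.Subset.refl _)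
    · intro U hU
      simp only [mem_powerset] at hU
      simp only [mem_filter, mem_powerset]
      constructor
      · exact Finset.union_subset (hU.trans (Finset.sdiff_subset)) (hW.trans ht)
      · ext j
        simp only [Finset.mem_inter, Finset.mem_union]
        constructor
        · rintro ⟨hj1 | hj2, hjr⟩
          · exact absurd hjr (by simpa using (Finset.mem_sdiff.1 (hU hj1)).2)
          · exact hj2
        · intro hj
          exact ⟨Or.inr hj, hW hj⟩
    · intro S hS
      simp only [mem_filter, mem_powerset] at hS
      ext j
      simp only [Finset.mem_union, Finset.mem_sdiff]
      constructor
      · rintro (⟨hj, _⟩ | hj)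
        · exact hj
        · have : j ∈ S ∩ Finset.range t := by rw [hS.2]; exact hj
          exact (Finset.mem_inter.1 this).1
      · intro hj
        by_cases hjr : j ∈ Finset.range t
        · right
          have : j ∈ S ∩ Finset.range t := Finset.mem_inter.2 ⟨hj, hjr⟩
          rwa [hS.2] at this
        · exact Or.inl ⟨hj, hjr⟩
    · intro U hU
      simp only [mem_powerset] at hU
      ext j
      simp only [Finset.mem_sdiff, Finset.mem_union]
      constructor
      · rintro ⟨hj1 | hj2, hjr⟩
        · exact hj1
        · exact absurd (hW hj2) hjr
      · intro hj
        exact ⟨Or.inl hj, by simpa using (Finset.mem_sdiff.1 (hU hj)).2⟩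
  rw [key, Finset.card_powerset, Finset.card_sdiff_of_subset ht, Finset.card_range]

lemma edge_sub_range (b : ℕ → Prop) (i : ℕ) : edgeOf b i ⊆ Finset.range (i+1) := by
  intro j hj
  rcases Finset.mem_insert.1 hj with h | h
  · simp [h]
  · have := (Finset.mem_filter.1 h).1
    simp only [Finset.mem_range] at this ⊢
    omega

/-- members of `Ak` (for a true bit `k`) are independent w.r.t. all of `Eset b`. -/
lemma Ak_indep (b : ℕ → Prop) (V : Finset ℕ) (k : ℕ) (hbk : b k)
    (S : Finset ℕ) (hS : S ∈ Ak b V k) :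
    ∀ e ∈ Eset b, ¬ e ⊆ S := by
  rintro e ⟨i, hbi, rfl⟩ hsub
  have hiS : i ∈ S := hsub (Finset.mem_insert_self _ _)
  have hSr := (Finset.mem_filter.1 hS).2
  rcases le_or_gt i k with hik | hki
  · have : i ∈ S ∩ Finset.range (k+1) := by
      simp only [Finset.mem_inter, Finset.mem_range]
      exact ⟨hiS, by omega⟩
    rw [hSr] at this
    exact hbi (Finset.mem_filter.1 this).2
  · have hkF : k ∈ edgeOf b i := by
      apply Finset.mem_insert_of_mem
      simp only [Finset.mem_filter, Finset.mem_range]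
      exact ⟨hki, hbk⟩
    have : k ∈ S ∩ Finset.range (k+1) := by
      simp only [Finset.mem_inter, Finset.mem_range]
      exact ⟨hsub hkF, by omega⟩
    rw [hSr] at this
    have := (Finset.mem_filter.1 this).1
    simp at this

lemma Ak_disjoint (b : ℕ → Prop) (V : Finset ℕ) {k k' : ℕ} (hbk : b k) (hbk' : b k')
    (hne : k ≠ k') : Disjoint (Ak b V k) (Ak b V k') := by
  wlog h : k < k' generalizing k k'
  · exact (this hbk' hbk hne.symm (by omega)).symm
  rw [Finset.disjoint_left]
  intro S hS hS'
  have h1 := (Finset.mem_filter.1 hS).2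
  have h2 := (Finset.mem_filter.1 hS').2
  -- from h2 : k ∈ S
  have hkS : k ∈ S := by
    have : k ∈ S ∩ Finset.range (k'+1) := by
      rw [h2]
      simp only [Finset.mem_filter, Finset.mem_range]
      exact ⟨h, hbk⟩
    exact (Finset.mem_inter.1 this).1
  -- from h1 : k ∉ S
  have : k ∈ S ∩ Finset.range (k+1) := by
    simp only [Finset.mem_inter, Finset.mem_range]
    exact ⟨hkS, by omega⟩
  rw [h1] at this
  have := (Finset.mem_filter.1 this).1
  simp at this

/-- the cover lemma: every independent set lies in `Bset` or some `Ak`. -/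
lemma cover (b : ℕ → Prop) (V : Finset ℕ) (M : ℕ) (hM : Finset.range M ⊆ V)
    (S : Finset ℕ) (hSV : S ⊆ V)
    (hind : ∀ e ∈ inducedEdges (Eset b) V, ¬ e ⊆ S) :
    S ∈ Bset b V M ∨ ∃ k, k < M ∧ b k ∧ S ∈ Ak b V k := by
  -- induced edges: for i < M with ¬ b i, edgeOf b i is induced
  have hinduced : ∀ i < M, ¬ b i → edgeOf b i ∈ inducedEdges (Eset b) V := by
    intro i hi hbi
    simp only [inducedEdges, Finset.mem_filter, Finset.mem_powerset]
    refine ⟨(edge_sub_range b i).trans ((Finset.range_subset_range.2 (by omega)).trans hM), ⟨i, hbi, rfl⟩⟩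
  by_cases hex : ∃ k, k < M ∧ b k ∧ k ∉ S
  · right
    classical
    obtain ⟨k, hk⟩ := hex
    -- take minimal
    have hexP : ∃ k, k < M ∧ b k ∧ k ∉ S := ⟨k, hk⟩
    set k0 := Nat.find hexP with hk0
    obtain ⟨hk0M, hbk0, hk0S⟩ := Nat.find_spec hexP
    have hmin : ∀ j < k0, b j → j ∈ S := by
      intro j hj hbj
      by_contra hjS
      exact absurd ⟨by omega, hbj, hjS⟩ (Nat.find_min hexP hj)
    refine ⟨k0, hk0M, hbk0, ?_⟩
    simp only [Ak, Finset.mem_filter, Finset.mem_powerset]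
    refine ⟨hSV, ?_⟩
    ext j
    simp only [Finset.mem_inter, Finset.mem_range, Finset.mem_filter]
    constructor
    · rintro ⟨hjS, hjk⟩
      have hjk0 : j < k0 := by
        rcases Nat.lt_succ_iff_lt_or_eq.1 hjk with h | h
        · exact h
        · exact absurd hjS (by rw [h]; exact hk0S)
      refine ⟨hjk0, ?_⟩
      by_contra hbj
      -- edge at j is induced and contained in S
      apply hind _ (hinduced j (by omega) hbj)
      intro x hx
      rcases Finset.mem_insert.1 hx with rfl | hx
      · exact hjS
      · obtain ⟨hxr, hbx⟩ := Finset.mem_filter.1 hx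
        exact hmin x (by simp only [Finset.mem_range] at hxr; omega) hbx
    · rintro ⟨hjk, hbj⟩
      exact ⟨hmin j hjk hbj, by omega⟩
  · left
    push_neg at hex
    simp only [Bset, Finset.mem_filter, Finset.mem_powerset]
    refine ⟨hSV, ?_⟩
    ext j
    simp only [Finset.mem_inter, Finset.mem_range, Finset.mem_filter]
    constructor
    · rintro ⟨hjS, hjM⟩
      refine ⟨hjM, ?_⟩
      by_contra hbj
      apply hind _ (hinduced j hjM hbj)
      intro x hx
      rcases Finset.mem_insert.1 hx with rfl | hx
      · exact hjS
      · obtain ⟨hxr, hbx⟩ := Finset.mem_filter.1 hx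
        exact hex x (by simp only [Finset.mem_range] at hxr; omega) hbx
    · rintro ⟨hjM, hbj⟩
      exact ⟨hex j hjM hbj, hjM⟩

lemma count_lower (b : ℕ → Prop) (V : Finset ℕ) (M : ℕ) (hM : Finset.range M ⊆ V) :
    ∑ k ∈ (Finset.range M).filter b, 2 ^ (V.card - (k+1))
      ≤ indepCount V (inducedEdges (Eset b) V) := by
  have hsub : ((Finset.range M).filter b).biUnion (fun k => Ak b V k)
      ⊆ V.powerset.filter (fun S => ∀ e ∈ inducedEdges (Eset b) V, ¬ e ⊆ S) := by
    intro S hS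
    obtain ⟨k, hk, hSk⟩ := Finset.mem_biUnion.1 hS
    obtain ⟨hkM, hbk⟩ := Finset.mem_filter.1 hk
    simp only [Finset.mem_filter, Finset.mem_powerset]
    refine ⟨(Finset.mem_powerset.1 (Finset.mem_filter.1 hSk).1), ?_⟩
    intro e he
    exact Ak_indep b V k hbk S hSk e (by
      simp only [inducedEdges, Finset.mem_filter] at he
      exact he.2)
  calc ∑ k ∈ (Finset.range M).filter b, 2 ^ (V.card - (k+1))
      = (((Finset.range M).filter b).biUnion (fun k => Ak b V k)).card := by
        rw [Finset.card_biUnion]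
        · apply Finset.sum_congr rfl
          intro k hk
          obtain ⟨hkM, hbk⟩ := Finset.mem_filter.1 hk
          rw [Ak, card_fixed V _ (k+1)
            ((Finset.filter_subset _ _).trans (Finset.range_subset_range.2 (by omega)))
            ((Finset.range_subset_range.2 (by simp only [Finset.mem_range] at hkM; omega)).trans hM)]
        · intro x hx y hy hxy
          exact Ak_disjoint b V (Finset.mem_filter.1 hx).2 (Finset.mem_filter.1 hy).2 hxy
    _ ≤ _ := Finset.card_le_card hsub

lemma count_upper (b : ℕ → Prop) (V : Finset ℕ) (M : ℕ) (hM : Finset.range M ⊆ V) :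
    indepCount V (inducedEdges (Eset b) V)
      ≤ 2 ^ (V.card - M) + ∑ k ∈ (Finset.range M).filter b, 2 ^ (V.card - (k+1)) := by
  have hsub : V.powerset.filter (fun S => ∀ e ∈ inducedEdges (Eset b) V, ¬ e ⊆ S)
      ⊆ Bset b V M ∪ ((Finset.range M).filter b).biUnion (fun k => Ak b V k) := by
    intro S hS
    obtain ⟨hSV, hind⟩ := Finset.mem_filter.1 hS
    rcases cover b V M hM S (Finset.mem_powerset.1 hSV) hind with h | ⟨k, hkM, hbk, hAk⟩
    · exact Finset.mem_union.2 (Or.inl h)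
    · exact Finset.mem_union.2 (Or.inr (Finset.mem_biUnion.2
        ⟨k, Finset.mem_filter.2 ⟨Finset.mem_range.2 hkM, hbk⟩, hAk⟩))
  calc indepCount V (inducedEdges (Eset b) V)
      ≤ (Bset b V M ∪ ((Finset.range M).filter b).biUnion (fun k => Ak b V k)).card :=
        Finset.card_le_card hsub
    _ ≤ (Bset b V M).card + (((Finset.range M).filter b).biUnion (fun k => Ak b V k)).card :=
        Finset.card_union_le _ _
    _ ≤ 2 ^ (V.card - M) + ∑ k ∈ (Finset.range M).filter b, 2 ^ (V.card - (k+1)) := by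
        gcongr
        · rw [Bset, card_fixed V _ M (Finset.filter_subset _ _) hM]
        · calc (((Finset.range M).filter b).biUnion (fun k => Ak b V k)).card
              ≤ ∑ k ∈ (Finset.range M).filter b, (Ak b V k).card := Finset.card_biUnion_le
            _ = ∑ k ∈ (Finset.range M).filter b, 2 ^ (V.card - (k+1)) := by
                apply Finset.sum_congr rfl
                intro k hk
                obtain ⟨hkM, hbk⟩ := Finset.mem_filter.1 hk
                rw [Ak, card_fixed V _ (k+1)
                  ((Finset.filter_subset _ _).trans (Finset.range_subset_range.2 (by omega)))
                  ((Finset.range_subset_range.2 (by simp only [Finset.mem_range] at hkM; omega)).trans hM)]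

/-- partial sums of the bit series -/
noncomputable def P (b : ℕ → Prop) (M : ℕ) : ℝ :=
  ∑ k ∈ (Finset.range M).filter b, ((1:ℝ)/2) ^ (k+1)

lemma density_bounds (b : ℕ → Prop) (V : Finset ℕ) (M : ℕ) (hM : Finset.range M ⊆ V) :
    P b M ≤ indepDensity V (inducedEdges (Eset b) V) ∧
    indepDensity V (inducedEdges (Eset b) V) ≤ P b M + ((1:ℝ)/2) ^ M := by
  have hMc : M ≤ V.card := by
    calc M = (Finset.range M).card := (Finset.card_range M).symm
      _ ≤ V.card := Finset.card_le_card hM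
  have h2 : (0:ℝ) < 2 ^ V.card := by positivity
  have hcast : ∀ m : ℕ, m ≤ V.card → ((2 ^ (V.card - m) : ℕ) : ℝ) = 2 ^ V.card * ((1:ℝ)/2) ^ m := by
    intro m hm
    push_cast
    rw [pow_sub₀ (2:ℝ) (by norm_num) hm, div_eq_mul_inv]
    simp [inv_pow]
  have hsumcast : ((∑ k ∈ (Finset.range M).filter b, 2 ^ (V.card - (k+1)) : ℕ) : ℝ)
      = 2 ^ V.card * P b M := by
    push_cast
    rw [P, Finset.mul_sum]
    apply Finset.sum_congr rfl
    intro k hk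
    have hkM := Finset.mem_range.1 (Finset.mem_filter.1 hk).1
    have := hcast (k+1) (by omega)
    push_cast at this
    exact this
  constructor
  · rw [indepDensity, le_div_iff₀ h2]
    calc P b M * 2 ^ V.card = ((∑ k ∈ (Finset.range M).filter b, 2 ^ (V.card - (k+1)) : ℕ) : ℝ) := by
          rw [hsumcast]; ring
      _ ≤ (indepCount V (inducedEdges (Eset b) V) : ℝ) := by
          exact_mod_cast count_lower b V M hM
  · rw [indepDensity, div_le_iff₀ h2]
    calc (indepCount V (inducedEdges (Eset b) V) : ℝ)
        ≤ ((2 ^ (V.card - M) + ∑ k ∈ (Finset.range M).filter b, 2 ^ (V.card - (k+1)) : ℕ) : ℝ) := by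
          exact_mod_cast count_upper b V M hM
      _ = (P b M + ((1:ℝ)/2) ^ M) * 2 ^ V.card := by
          push_cast [hsumcast]
          have h3 : (2:ℝ) ^ (V.card - M) = 2 ^ V.card * ((1:ℝ)/2) ^ M := by
            rw [pow_sub₀ (2:ℝ) (by norm_num) hMc, div_eq_mul_inv]
            simp [inv_pow]
          rw [h3]
          ring

/-- greedy binary expansion remainders -/
noncomputable def rem (r : ℝ) : ℕ → ℝ
  | 0 => r
  | (k+1) => if ((1:ℝ)/2) ^ (k+1) ≤ rem r k then rem r k - ((1:ℝ)/2) ^ (k+1) else rem r k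

def bit (r : ℝ) (k : ℕ) : Prop := ((1:ℝ)/2) ^ (k+1) ≤ rem r k

lemma rem_bounds (r : ℝ) (h0 : 0 ≤ r) (h1 : r ≤ 1) :
    ∀ M, 0 ≤ rem r M ∧ rem r M ≤ ((1:ℝ)/2) ^ M := by
  intro M
  induction M with
  | zero => simpa [rem] using ⟨h0, h1⟩
  | succ k ih =>
    rw [rem]
    split_ifs with h
    · constructor
      · linarith
      · have : ((1:ℝ)/2) ^ (k+1) = ((1:ℝ)/2) ^ k / 2 := by ring
        nlinarith [ih.2]
    · push_neg at h
      exact ⟨ih.1, le_of_lt h⟩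

lemma P_bit_eq (r : ℝ) : ∀ M, P (bit r) M = r - rem r M := by
  intro M
  induction M with
  | zero => simp [P, rem]
  | succ k ih =>
    have hsplit : P (bit r) (k+1) = P (bit r) k + (if bit r k then ((1:ℝ)/2)^(k+1) else 0) := by
      rw [P, P, Finset.sum_filter, Finset.sum_filter, Finset.sum_range_succ]
    rw [hsplit, ih, rem]
    by_cases h : bit r k
    · have h' : ((1:ℝ)/2) ^ (k+1) ≤ rem r k := h
      rw [if_pos h, if_pos h']
      ring
    · have h' : ¬ ((1:ℝ)/2) ^ (k+1) ≤ rem r k := h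
      rw [if_neg h, if_neg h']
      ring

end IndepAux

/-- For every real `r ∈ [0,1]` there is a countable hypergraph on vertex set
`ℕ` (with all hyperedges finite and nonempty) whose independence density is
exactly `r`: along every chain of finite vertex sets exhausting `ℕ`, the
independence densities of the induced subhypergraphs converge to `r`. -/
theorem indepDensity_surjective_onto_unit_interval (r : ℝ)
    (hr : r ∈ Set.Icc (0 : ℝ) 1) :
    ∃ E : Set (Finset ℕ), (∀ e ∈ E, e.Nonempty) ∧
      ∀ V : ℕ → Finset ℕ, Monotone V → (⋃ n, (V n : Set ℕ)) = Set.univ →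
        Tendsto (fun n => indepDensity (V n) (inducedEdges E (V n)))
          atTop (nhds r) := by
  obtain ⟨h0, h1⟩ := hr
  refine ⟨IndepAux.Eset (IndepAux.bit r), ?_, ?_⟩
  · rintro e ⟨i, _, rfl⟩
    exact ⟨i, Finset.mem_insert_self _ _⟩
  · intro V hmono hexh
    rw [Metric.tendsto_atTop]
    intro ε hε
    obtain ⟨M, hM⟩ := exists_pow_lt_of_lt_one hε (by norm_num : (1:ℝ)/2 < 1)
    -- find N with range M ⊆ V N
    have hmem : ∀ j : ℕ, ∃ n, j ∈ V n := by
      intro j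
      have : (j : ℕ) ∈ ⋃ n, (V n : Set ℕ) := by rw [hexh]; trivial
      simpa using this
    choose f hf using hmem
    refine ⟨(Finset.range M).sup f, ?_⟩
    intro n hn
    have hMV : Finset.range M ⊆ V n := by
      intro j hj
      have : f j ≤ n := le_trans (Finset.le_sup hj) hn
      exact hmono this (hf j)
    obtain ⟨hlo, hhi⟩ := IndepAux.density_bounds (IndepAux.bit r) (V n) M hMV
    have hP : IndepAux.P (IndepAux.bit r) M = r - IndepAux.rem r M := IndepAux.P_bit_eq r M
    obtain ⟨hr0, hr1⟩ := IndepAux.rem_bounds r h0 h1 M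
    rw [Real.dist_eq, abs_sub_lt_iff]
    constructor
    · -- density - r < ε
      have : indepDensity (V n) (inducedEdges (IndepAux.Eset (IndepAux.bit r)) (V n))
          ≤ r + ((1:ℝ)/2)^M := by
        rw [hP] at hhi
        linarith
      linarith
    · -- r - density < ε
      have : r - ((1:ℝ)/2)^M ≤ indepDensity (V n) (inducedEdges (IndepAux.Eset (IndepAux.bit r)) (V n)) := by
        rw [hP] at hlo
        linarith
      linarith
end

section
/- For every real r > 1, there is a chain C_r of finite graphs G_n = K_{a_n} ∪ \overline{K_{b_n}} (disjoint union of a clique and an independent set), with a_n, b_n → ∞, whose limit is K_ω ∪ \overline{K_ω}, such that lim_{n→∞} i(G_n, x)/2^{a_n+b_n} = 0 for all 0 ≤ x < r and = ∞ for all x ≥ r. Specifically one may take b_n = n and a_n = ⌊Cn⌋ where 2^{C+1} = 1 + r. -/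
open Finset Filter

/-- The independence polynomial of a finite hypergraph `(V, E)` evaluated at
`x`. -/
noncomputable def indepPoly (V : Finset ℕ) (E : Finset (Finset ℕ)) (x : ℝ) : ℝ :=
  ∑ S ∈ V.powerset.filter (fun S => ∀ e ∈ E, ¬ e ⊆ S), x ^ S.card

/-- The edge set of the graph `K_a ∪ K̄_b` on the vertex set `{0, …, a+b-1}`:
all pairs inside `{0, …, a-1}` (a clique), no edges among the remaining `b`
vertices. -/
noncomputable def cliquePlusEmptyEdges (a : ℕ) : Finset (Finset ℕ) :=
  ((Finset.range a ×ˢ Finset.range a).filter (fun p => p.1 < p.2)).image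
    (fun p => ({p.1, p.2} : Finset ℕ))

lemma mem_edges {a : ℕ} {e : Finset ℕ} :
    e ∈ cliquePlusEmptyEdges a ↔ ∃ i j, i < j ∧ j < a ∧ e = {i, j} := by
  simp only [cliquePlusEmptyEdges, mem_image, mem_filter, mem_product, mem_range, Prod.exists]
  constructor
  · rintro ⟨i, j, ⟨⟨hi, hj⟩, hij⟩, rfl⟩
    exact ⟨i, j, hij, hj, rfl⟩
  · rintro ⟨i, j, hij, hj, rfl⟩
    exact ⟨i, j, ⟨⟨hij.trans hj, hj⟩, hij⟩, rfl⟩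

lemma indep_iff_card (a : ℕ) (S : Finset ℕ) (hS : S ⊆ Finset.range a) :
    (∀ e ∈ cliquePlusEmptyEdges a, ¬ e ⊆ S) ↔ S.card ≤ 1 := by
  constructor
  · intro h
    by_contra hc
    push_neg at hc
    obtain ⟨i, hi, j, hj, hne⟩ := Finset.one_lt_card.1 hc
    rcases lt_or_gt_of_ne hne with hlt | hlt
    · exact h {i, j} (mem_edges.2 ⟨i, j, hlt, Finset.mem_range.1 (hS hj), rfl⟩)
        (Finset.insert_subset hi (Finset.singleton_subset_iff.2 hj))
    · exact h {j, i} (mem_edges.2 ⟨j, i, hlt, Finset.mem_range.1 (hS hi), rfl⟩)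
        (Finset.insert_subset hj (Finset.singleton_subset_iff.2 hi))
  · intro h e he hsub
    obtain ⟨i, j, hij, hj, rfl⟩ := mem_edges.1 he
    have : ({i, j} : Finset ℕ).card = 2 := Finset.card_pair hij.ne
    have := Finset.card_le_card hsub
    omega

lemma indepPoly_eq (a b : ℕ) (x : ℝ) :
    indepPoly (Finset.range (a + b)) (cliquePlusEmptyEdges a) x = (1 + a * x) * (1 + x) ^ b := by
  induction b with
  | zero =>
    simp only [Nat.add_zero, pow_zero, mul_one, indepPoly]
    have hfe : (Finset.range a).powerset.filter
        (fun S => ∀ e ∈ cliquePlusEmptyEdges a, ¬ e ⊆ S)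
        = (Finset.range a).powerset.filter (fun S => S.card ≤ 1) := by
      apply Finset.filter_congr
      intro S hS
      simpa using indep_iff_card a S (Finset.mem_powerset.1 hS)
    rw [hfe]
    have hsplit : (Finset.range a).powerset.filter (fun S => S.card ≤ 1)
        = (Finset.range a).powerset.filter (fun S => S.card = 0)
          ∪ (Finset.range a).powerset.filter (fun S => S.card = 1) := by
      rw [← Finset.filter_or]
      apply Finset.filter_congr
      intro S _
      simp [Nat.le_one_iff_eq_zero_or_eq_one]
    rw [hsplit, Finset.sum_union]
    · have h0 : (Finset.range a).powerset.filter (fun S => S.card = 0) = {∅} := by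
        ext S
        simp only [Finset.mem_filter, Finset.mem_powerset, Finset.card_eq_zero, Finset.mem_singleton]
        constructor
        · rintro ⟨_, rfl⟩; rfl
        · rintro rfl; exact ⟨Finset.empty_subset _, rfl⟩
      have h1 : (Finset.range a).powerset.filter (fun S => S.card = 1)
          = (Finset.range a).powersetCard 1 := by
        rw [Finset.powersetCard_eq_filter]
      rw [h0, h1]
      have : ∑ S ∈ (Finset.range a).powersetCard 1, x ^ S.card
          = ∑ S ∈ (Finset.range a).powersetCard 1, x := by
        apply Finset.sum_congr rfl
        intro S hS
        rw [(Finset.mem_powersetCard.1 hS).2, pow_one]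
      rw [this, Finset.sum_const, Finset.card_powersetCard, Finset.card_range]
      simp [Nat.choose_one_right]
    · rw [Finset.disjoint_filter]
      intro S _ h0 h1
      omega
  | succ b ih =>
    have hrange : Finset.range (a + (b + 1)) = insert (a + b) (Finset.range (a + b)) := by
      rw [show a + (b + 1) = (a + b) + 1 by ring, Finset.range_add_one]
    have hnotmem : a + b ∉ Finset.range (a + b) := by simp
    unfold indepPoly
    rw [hrange]
    rw [Finset.sum_filter, Finset.sum_powerset_insert hnotmem]
    have key : ∀ T ∈ (Finset.range (a + b)).powerset,
        (∀ e ∈ cliquePlusEmptyEdges a, ¬ e ⊆ insert (a + b) T) ↔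
          (∀ e ∈ cliquePlusEmptyEdges a, ¬ e ⊆ T) := by
      intro T hT
      constructor
      · intro h e he hsub
        exact h e he (hsub.trans (Finset.subset_insert _ _))
      · intro h e he hsub
        apply h e he
        intro y hy
        obtain ⟨i, j, hij, hj, rfl⟩ := mem_edges.1 he
        have hy' := hsub hy
        rcases Finset.mem_insert.1 hy' with h1 | h1
        · exfalso
          subst h1
          simp only [Finset.mem_insert, Finset.mem_singleton] at hy
          omega
        · exact h1
    have e2 : ∀ T ∈ (Finset.range (a + b)).powerset,
        (if (∀ e ∈ cliquePlusEmptyEdges a, ¬ e ⊆ insert (a + b) T)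
          then x ^ (insert (a + b) T).card else 0)
        = x * (if (∀ e ∈ cliquePlusEmptyEdges a, ¬ e ⊆ T) then x ^ T.card else 0) := by
      intro T hT
      have hTm : a + b ∉ T := fun hmem =>
        hnotmem (Finset.mem_powerset.1 hT hmem)
      rw [Finset.card_insert_of_notMem hTm]
      by_cases h : ∀ e ∈ cliquePlusEmptyEdges a, ¬ e ⊆ T
      · rw [if_pos ((key T hT).2 h), if_pos h]
        ring
      · rw [if_neg (fun h' => h ((key T hT).1 h')), if_neg h]
        ring
    rw [Finset.sum_congr rfl e2, ← Finset.mul_sum, ← Finset.sum_filter]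
    show (indepPoly (Finset.range (a+b)) (cliquePlusEmptyEdges a) x) + x * (indepPoly (Finset.range (a+b)) (cliquePlusEmptyEdges a) x) = _
    rw [ih]
    ring

/-- For every real `r > 1` there is a chain of graphs
`G_n = K_{a_n} ∪ K̄_{b_n}` with `a_n, b_n → ∞` (so with limit
`K_ω ∪ K̄_ω`) such that `i(G_n, x)/2^{a_n + b_n} → 0` for all `0 ≤ x < r` and
`i(G_n, x)/2^{a_n + b_n} → ∞` for all `x ≥ r`; specifically, one may take
`b_n = n` and `a_n = ⌊Cn⌋` where `2^(C+1) = 1 + r`. -/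
theorem jumping_point_chain (r : ℝ) (hr : 1 < r) :
    ∃ a b : ℕ → ℕ, Monotone a ∧ Monotone b ∧
      Tendsto a atTop atTop ∧ Tendsto b atTop atTop ∧
      (∃ C : ℝ, (2 : ℝ) ^ (C + 1) = 1 + r ∧
        ∀ n, a n = ⌊C * n⌋₊ ∧ b n = n) ∧
      (∀ x : ℝ, 0 ≤ x → x < r →
        Tendsto (fun n =>
            indepPoly (Finset.range (a n + b n)) (cliquePlusEmptyEdges (a n)) x /
              2 ^ (a n + b n)) atTop (nhds 0)) ∧
      (∀ x : ℝ, r ≤ x →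
        Tendsto (fun n =>
            indepPoly (Finset.range (a n + b n)) (cliquePlusEmptyEdges (a n)) x /
              2 ^ (a n + b n)) atTop atTop) := by
  set C : ℝ := Real.logb 2 (1 + r) - 1 with hCdef
  have hr2 : (2:ℝ) < 1 + r := by linarith
  have h2C : (2:ℝ) ^ (C + 1) = 1 + r := by
    rw [hCdef, sub_add_cancel]
    exact Real.rpow_logb two_pos (by norm_num) (by linarith)
  have hC : 0 < C := by
    have : (1:ℝ) < Real.logb 2 (1 + r) := by
      have h := Real.logb_lt_logb (b := 2) one_lt_two two_pos hr2
      simpa using h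
    linarith
  refine ⟨fun n => ⌊C * n⌋₊, fun n => n, ?_, fun _ _ h => h, ?_, tendsto_id,
    ⟨C, h2C, fun n => ⟨rfl, rfl⟩⟩, ?_, ?_⟩
  · intro m n h
    exact Nat.floor_le_floor (mul_le_mul_of_nonneg_left (Nat.cast_le.2 h) hC.le)
  · exact tendsto_nat_floor_atTop.comp (tendsto_natCast_atTop_atTop.const_mul_atTop hC)
  -- shared facts about the denominator
  · -- case 0 ≤ x < r : limit 0
    intro x hx0 hxr
    have hrp : (0:ℝ) < 1 + r := by linarith
    have hxp : (0:ℝ) < 1 + x := by linarith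
    set q : ℝ := (1 + x) / (1 + r) with hq
    have hq0 : 0 ≤ q := by positivity
    have hq1 : q < 1 := (div_lt_one hrp).2 (by linarith)
    apply squeeze_zero (g := fun n : ℕ => 2 * q ^ n + (2 * C * x) * (n * q ^ n))
    · intro n
      rw [indepPoly_eq]
      positivity
    · intro n
      rw [indepPoly_eq]
      have hD_ge : (1 + r) ^ n / 2 ≤ (2:ℝ) ^ (⌊C * (n:ℝ)⌋₊ + n) := by
        have h1 : (C + 1) * n - 1 ≤ ((⌊C * (n:ℝ)⌋₊ + n : ℕ) : ℝ) := by
          push_cast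
          have := Nat.sub_one_lt_floor (C * n)
          nlinarith
        calc (1 + r) ^ n / 2 = (1 + r) ^ (n:ℝ) / 2 := by rw [Real.rpow_natCast]
          _ = ((2:ℝ) ^ (C + 1)) ^ (n:ℝ) / (2:ℝ) ^ (1:ℝ) := by rw [h2C, Real.rpow_one]
          _ = (2:ℝ) ^ ((C + 1) * n - 1) := by
              rw [Real.rpow_sub two_pos, ← Real.rpow_mul (by norm_num)]
          _ ≤ (2:ℝ) ^ (((⌊C * (n:ℝ)⌋₊ + n : ℕ)):ℝ) :=
              Real.rpow_le_rpow_of_exponent_le one_le_two h1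
          _ = (2:ℝ) ^ (⌊C * (n:ℝ)⌋₊ + n) := Real.rpow_natCast 2 _
      have hDpos : (0:ℝ) < (2:ℝ) ^ (⌊C * (n:ℝ)⌋₊ + n) := by positivity
      have hnum0 : (0:ℝ) ≤ (1 + (⌊C * (n:ℝ)⌋₊ : ℝ) * x) * (1 + x) ^ n := by positivity
      have step1 : (1 + (⌊C * (n:ℝ)⌋₊ : ℝ) * x) * (1 + x) ^ n / (2:ℝ) ^ (⌊C * (n:ℝ)⌋₊ + n)
          ≤ (1 + (⌊C * (n:ℝ)⌋₊ : ℝ) * x) * (1 + x) ^ n / ((1 + r) ^ n / 2) :=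
        div_le_div_of_nonneg_left hnum0 (by positivity) hD_ge
      have hfloor : (⌊C * (n:ℝ)⌋₊ : ℝ) ≤ C * n := Nat.floor_le (by positivity)
      have step2 : (1 + (⌊C * (n:ℝ)⌋₊ : ℝ) * x) * (1 + x) ^ n / ((1 + r) ^ n / 2)
          ≤ 2 * q ^ n + (2 * C * x) * (n * q ^ n) := by
        have hqpow : q ^ n = (1 + x) ^ n / (1 + r) ^ n := div_pow _ _ n
        have hrpn : (0:ℝ) < (1 + r) ^ n := by positivity
        rw [div_div_eq_mul_div, div_le_iff₀ hrpn]
        rw [hqpow]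
        have hxn : (0:ℝ) ≤ (1 + x) ^ n := by positivity
        have key : (1 + (⌊C * (n:ℝ)⌋₊ : ℝ) * x) ≤ 1 + C * n * x := by nlinarith
        have expand : (2 * ((1 + x) ^ n / (1 + r) ^ n)
            + (2 * C * x) * (n * ((1 + x) ^ n / (1 + r) ^ n))) * (1 + r) ^ n
            = (1 + C * n * x) * (1 + x) ^ n * 2 := by
          field_simp
        rw [expand]
        nlinarith
      calc (1 + (⌊C * (n:ℝ)⌋₊ : ℝ) * x) * (1 + x) ^ n / (2:ℝ) ^ (⌊C * (n:ℝ)⌋₊ + n)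
          ≤ _ := step1
        _ ≤ _ := step2
    · have t1 : Tendsto (fun n : ℕ => 2 * q ^ n) atTop (nhds 0) := by
        have := (tendsto_pow_atTop_nhds_zero_of_lt_one hq0 hq1).const_mul 2
        simpa using this
      have t2 : Tendsto (fun n : ℕ => (2 * C * x) * (n * q ^ n)) atTop (nhds 0) := by
        have := (tendsto_self_mul_const_pow_of_lt_one hq0 hq1).const_mul (2 * C * x)
        simpa using this
      simpa using t1.add t2
  · -- case r ≤ x : limit ∞
    intro x hrx
    have hx0 : (0:ℝ) < x := by linarith
    have hrp : (0:ℝ) < 1 + r := by linarith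
    have hxp : (0:ℝ) < 1 + x := by linarith
    set q : ℝ := (1 + x) / (1 + r) with hq
    have hq1 : 1 ≤ q := (one_le_div hrp).2 (by linarith)
    have hbase : Tendsto (fun n : ℕ => 1 + (⌊C * (n:ℝ)⌋₊ : ℝ) * x) atTop atTop := by
      apply tendsto_atTop_add_const_left
      apply Tendsto.atTop_mul_const hx0
      exact tendsto_natCast_atTop_atTop.comp
        (tendsto_nat_floor_atTop.comp (tendsto_natCast_atTop_atTop.const_mul_atTop hC))
    apply tendsto_atTop_mono _ hbase
    intro n
    rw [indepPoly_eq]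
    have hD_le : (2:ℝ) ^ (⌊C * (n:ℝ)⌋₊ + n) ≤ (1 + r) ^ n := by
      have h1 : ((⌊C * (n:ℝ)⌋₊ + n : ℕ) : ℝ) ≤ (C + 1) * n := by
        push_cast
        have := Nat.floor_le (by positivity : (0:ℝ) ≤ C * n)
        nlinarith
      calc (2:ℝ) ^ (⌊C * (n:ℝ)⌋₊ + n) = (2:ℝ) ^ (((⌊C * (n:ℝ)⌋₊ + n : ℕ)):ℝ) :=
            (Real.rpow_natCast 2 _).symm
        _ ≤ (2:ℝ) ^ ((C + 1) * n) := Real.rpow_le_rpow_of_exponent_le one_le_two h1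
        _ = ((2:ℝ) ^ (C + 1)) ^ (n:ℝ) := Real.rpow_mul (by norm_num) _ _
        _ = (1 + r) ^ (n:ℝ) := by rw [h2C]
        _ = (1 + r) ^ n := Real.rpow_natCast _ _
    have hDpos : (0:ℝ) < (2:ℝ) ^ (⌊C * (n:ℝ)⌋₊ + n) := by positivity
    have hnum0 : (0:ℝ) ≤ 1 + (⌊C * (n:ℝ)⌋₊ : ℝ) * x := by positivity
    have hqpow : (1:ℝ) ≤ (1 + x) ^ n / (1 + r) ^ n := by
      rw [← div_pow]
      exact one_le_pow₀ hq1
    have step1 : (1 + (⌊C * (n:ℝ)⌋₊ : ℝ) * x) * ((1 + x) ^ n / (1 + r) ^ n)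
        ≤ (1 + (⌊C * (n:ℝ)⌋₊ : ℝ) * x) * (1 + x) ^ n / (2:ℝ) ^ (⌊C * (n:ℝ)⌋₊ + n) := by
      rw [mul_div_assoc]
      apply mul_le_mul_of_nonneg_left _ hnum0
      apply div_le_div_of_nonneg_left (by positivity) hDpos hD_le
    calc 1 + (⌊C * (n:ℝ)⌋₊ : ℝ) * x
        = (1 + (⌊C * (n:ℝ)⌋₊ : ℝ) * x) * 1 := (mul_one _).symm
      _ ≤ (1 + (⌊C * (n:ℝ)⌋₊ : ℝ) * x) * ((1 + x) ^ n / (1 + r) ^ n) :=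
          mul_le_mul_of_nonneg_left hqpow hnum0
      _ ≤ _ := step1
end
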